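/- arXiv:1601.03033 — 12 statements merged into one kernel-verified Lean document; each statement's English description precedes it below -/
import Mathlib

section
/- Let I be an interval of length L, let μ ≥ 1, let x_1,…,x_μ ∈ I, and let ψ_1,…,ψ_μ : I → ℝ be C^{μ-1} functions. Define Δ = det(ψ_i(x_j))_{1≤i,j≤μ} and σ_{i,p} = sup_{ξ∈I} |ψ_i^{(p)}(ξ)|/p!. Then |Δ| ≤ L^{μ(μ-1)/2} · ∑_{s ∈ S_μ} σ_{1,s(0)} σ_{2,s(1)} ⋯ σ_{μ,s(μ-1)}, where S_μ is the group of permutations of {0,…,μ-1}. -/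
/-!
Multiplying `(ψ i (x j))` on the right by the upper triangular matrix of Lagrange nodal weights
`C k j = ∏_{l ≤ j, l ≠ k} (x k - x l)⁻¹` (for `k ≤ j`) produces the matrix of divided differences
`ψ i [x 0, …, x j]`, and `det C` is the inverse of the Vandermonde product
`∏_{l < j} (x j - x l)`, whose absolute value is at most `L ^ (μ(μ-1)/2)`.
A divided difference of order `p` equals `f⁽ᵖ⁾(ξ) / p!` for some `ξ` in the interval: `f` minus
its interpolation polynomial has `p + 1` zeros, so by repeated Rolle its `p`-th derivative
vanishes somewhere, while the interpolant's `p`-th derivative is the constant `p! · f[x_0, …, x_p]`.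
Hence the entries of the divided-difference matrix are bounded by `σ i j`, and expanding its
determinant over permutations gives the sum.
-/

open Finset Set Polynomial Lagrange

namespace Matrix

variable {R S : Type*} [CommRing R] [Nontrivial R] [CommRing S] [LinearOrder S]
  [IsStrictOrderedRing S] {n : Type*} [Fintype n] [DecidableEq n]

theorem det_le_sum_prod {A : Matrix n n R} {abv : AbsoluteValue R S} {B : n → n → S}
    (hB : ∀ i j, abv (A i j) ≤ B i j) :
    abv A.det ≤ ∑ σ : Equiv.Perm n, ∏ i, B i (σ i) :=
  calc abv A.det = abv (∑ σ : Equiv.Perm n, Equiv.Perm.sign σ • ∏ i, Aᵀ (σ i) i) := by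
        rw [← det_transpose, det_apply]
    _ ≤ ∑ σ : Equiv.Perm n, abv (Equiv.Perm.sign σ • ∏ i, Aᵀ (σ i) i) := abv.sum_le _ _
    _ = ∑ σ : Equiv.Perm n, ∏ i, abv (A i (σ i)) :=
        sum_congr rfl fun σ _ => by rw [abv.map_units_int_smul, abv.map_prod]; rfl
    _ ≤ ∑ σ : Equiv.Perm n, ∏ i, B i (σ i) := by
        gcongr with σ _ i _
        exact hB _ _

end Matrix

theorem Polynomial.iteratedDeriv_eval {𝕜 : Type*} [NontriviallyNormedField 𝕜] (P : 𝕜[X])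
    (k : ℕ) (x : 𝕜) : iteratedDeriv k (fun x => P.eval x) x = (derivative^[k] P).eval x := by
  induction k generalizing P with
  | zero => rfl
  | succ k ih =>
    have hderiv : deriv (fun x => P.eval x) = fun x => (derivative P).eval x := by
      ext y
      exact P.deriv
    rw [iteratedDeriv_succ', hderiv, ih, Function.iterate_succ_apply]

def dividedDifference {F ι : Type*} [Field F] [DecidableEq ι] (s : Finset ι) (v : ι → F)
    (f : F → F) : F :=
  ∑ i ∈ s, nodalWeight s v i * f (v i)

theorem eval_iterate_derivative_interpolate {F ι : Type*} [Field F] [DecidableEq ι]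
    {s : Finset ι} {v : ι → F} {p : ℕ} (hvs : Set.InjOn v s) (hs : #s = p + 1) (f : F → F)
    (y : F) :
    (derivative^[p] (interpolate s v fun i => f (v i))).eval y =
      p.factorial * dividedDifference s v f := by
  rw [eval_iterate_derivative_eq_sum hvs (degree_interpolate_lt _ hvs) (by omega) y, hs,
    Nat.sub_self, dividedDifference]
  congr 1
  refine sum_congr rfl fun i hi => ?_
  rw [eval_interpolate_at_node _ hvs hi]
  simp [nodalWeight, prod_inv_distrib, div_eq_inv_mul]

theorem exists_finset_deriv_eq_zero {g : ℝ → ℝ} {a b : ℝ} {p : ℕ} {t : Finset ℝ}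
    (ht : #t = p + 2) (hts : ↑t ⊆ Icc a b) (hg : ContinuousOn g (Icc a b))
    (hzero : ∀ u ∈ t, g u = 0) :
    ∃ t' : Finset ℝ, #t' = p + 1 ∧ ↑t' ⊆ Ioo a b ∧ ∀ u ∈ t', deriv g u = 0 := by
  set y := t.orderEmbOfFin ht
  have hy : ∀ k, y k ∈ t := t.orderEmbOfFin_mem ht
  have hrolle (k : Fin (p + 1)) :
      ∃ c ∈ Ioo (y k.castSucc) (y k.succ), deriv g c = 0 :=
    exists_deriv_eq_zero (y.strictMono k.castSucc_lt_succ)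
      (hg.mono (Icc_subset_Icc (hts (hy _)).1 (hts (hy _)).2))
      (by rw [hzero _ (hy _), hzero _ (hy _)])
  choose z hz hz0 using hrolle
  have hzmono : StrictMono z := Fin.strictMono_iff_lt_succ.2 fun k =>
    (hz k.castSucc).2.trans (by rw [Fin.succ_castSucc]; exact (hz k.succ).1)
  refine ⟨univ.map ⟨z, hzmono.injective⟩, by simp, ?_, by simpa using hz0⟩
  intro u hu
  obtain ⟨k, -, rfl⟩ := Finset.mem_map.1 hu
  exact ⟨(hts (hy _)).1.trans_lt (hz k).1, (hz k).2.trans_le (hts (hy _)).2⟩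

theorem exists_iteratedDerivWithin_eq_zero {g : ℝ → ℝ} {a b : ℝ} {p : ℕ} {t : Finset ℝ}
    (ht : #t = p + 1) (hts : ↑t ⊆ Icc a b) (hg : ContDiffOn ℝ p g (Icc a b))
    (hzero : ∀ u ∈ t, g u = 0) :
    ∃ ξ ∈ Icc a b, iteratedDerivWithin p g (Icc a b) ξ = 0 := by
  induction p generalizing g t with
  | zero =>
    obtain ⟨u, rfl⟩ := card_eq_one.1 ht
    exact ⟨u, hts (mem_singleton_self u), by simpa using hzero u (mem_singleton_self u)⟩
  | succ p ih =>
    obtain ⟨t', ht', ht's, hzero'⟩ := exists_finset_deriv_eq_zero ht hts hg.continuousOn hzero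
    obtain ⟨u, hu⟩ := card_pos.1 (by omega : 0 < #t')
    have hab : a < b := (ht's hu).1.trans (ht's hu).2
    have hg' : ContDiffOn ℝ p (derivWithin g (Icc a b)) (Icc a b) :=
      hg.derivWithin (uniqueDiffOn_Icc hab) (by norm_cast)
    have hzero'' : ∀ u ∈ t', derivWithin g (Icc a b) u = 0 := fun u hu => by
      rw [derivWithin_of_mem_nhds (Icc_mem_nhds (ht's hu).1 (ht's hu).2), hzero' u hu]
    obtain ⟨ξ, hξ, h⟩ := ih ht' (ht's.trans Ioo_subset_Icc_self) hg' hzero''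
    exact ⟨ξ, hξ, by rwa [iteratedDerivWithin_succ']⟩

theorem exists_dividedDifference_eq_iteratedDerivWithin {ι : Type*} [DecidableEq ι]
    {s : Finset ι} {v : ι → ℝ} {f : ℝ → ℝ} {a b : ℝ} {p : ℕ} (hvs : Set.InjOn v s)
    (hs : #s = p + 1) (hsub : ∀ i ∈ s, v i ∈ Icc a b) (hf : ContDiffOn ℝ p f (Icc a b)) :
    ∃ ξ ∈ Icc a b,
      dividedDifference s v f = iteratedDerivWithin p f (Icc a b) ξ / p.factorial := by
  rcases Nat.eq_zero_or_pos p with rfl | hp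
  · obtain ⟨i, rfl⟩ := card_eq_one.1 hs
    exact ⟨v i, hsub i (mem_singleton_self i), by simp [dividedDifference, nodalWeight]⟩
  obtain ⟨i, hi, j, hj, hij⟩ := one_lt_card.1 (by omega : 1 < #s)
  have hab : a < b := not_le.1 fun hba =>
    hvs.ne hi hj hij (Set.subsingleton_Icc_of_ge hba (hsub i hi) (hsub j hj))
  set Q := interpolate s v fun i => f (v i)
  have hQ : ContDiff ℝ p fun y => Q.eval y := by
    simpa using Q.contDiff_aeval (𝕜 := ℝ) p
  have hzero : ∀ u ∈ s.image v, (f - fun y => Q.eval y) u = 0 := by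
    intro u hu
    obtain ⟨i, hi, rfl⟩ := Finset.mem_image.1 hu
    show f (v i) - Q.eval (v i) = 0
    rw [eval_interpolate_at_node _ hvs hi, sub_self]
  obtain ⟨ξ, hξ, h⟩ := exists_iteratedDerivWithin_eq_zero (g := f - fun y => Q.eval y)
    ((card_image_of_injOn hvs).trans hs) (by simpa [Set.subset_def] using hsub)
    (hf.sub hQ.contDiffOn) hzero
  rw [iteratedDerivWithin_sub hξ (uniqueDiffOn_Icc hab) (hf ξ hξ) hQ.contDiffWithinAt,
    iteratedDerivWithin_eq_iteratedDeriv (uniqueDiffOn_Icc hab) hQ.contDiffAt hξ,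
    Q.iteratedDeriv_eval, eval_iterate_derivative_interpolate hvs hs, sub_eq_zero] at h
  exact ⟨ξ, hξ, by rw [h]; field_simp⟩

theorem det_eq_det_dividedDifference_mul_prod_sub {F : Type*} [Field F] {n : ℕ}
    (ψ : Fin n → F → F) {x : Fin n → F} (hx : Function.Injective x) :
    (Matrix.of fun i j => ψ i (x j)).det =
      (Matrix.of fun i j => dividedDifference (Iic j) x (ψ i)).det *
        ∏ j, ∏ l ∈ Iio j, (x j - x l) := by
  set C : Matrix (Fin n) (Fin n) F :=
    Matrix.of fun k j => if k ≤ j then nodalWeight (Iic j) x k else 0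
  have hAC : (Matrix.of fun i j => ψ i (x j)) * C =
      Matrix.of fun i j => dividedDifference (Iic j) x (ψ i) := by
    ext i j
    simp only [Matrix.mul_apply, Matrix.of_apply, C, mul_ite, mul_zero, dividedDifference]
    rw [← sum_filter]
    exact sum_congr (by ext; simp) fun k _ => mul_comm _ _
  have hC : C.det = (∏ j, ∏ l ∈ Iio j, (x j - x l))⁻¹ := by
    have hCtri : C.IsUpperTriangular := fun k j hjk => if_neg (not_le.2 hjk)
    rw [Matrix.det_of_isUpperTriangular hCtri, ← prod_inv_distrib]
    refine prod_congr rfl fun j _ => ?_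
    simp [C, nodalWeight, Iic_erase, prod_inv_distrib]
  have hV : ∏ j, ∏ l ∈ Iio j, (x j - x l) ≠ 0 :=
    prod_ne_zero_iff.2 fun j _ => prod_ne_zero_iff.2 fun l hl =>
      sub_ne_zero.2 (hx.ne (mem_Iio.1 hl).ne')
  rw [← hAC, Matrix.det_mul, hC, inv_mul_cancel_right₀ hV]

theorem abs_prod_sub_le_pow {R : Type*} [CommRing R] [LinearOrder R] [IsStrictOrderedRing R]
    {n : ℕ} {x : Fin n → R} {L : R} (hx : ∀ j l, |x j - x l| ≤ L) :
    |∏ j, ∏ l ∈ Iio j, (x j - x l)| ≤ L ^ (n * (n - 1) / 2) :=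
  calc |∏ j, ∏ l ∈ Iio j, (x j - x l)| = ∏ j, ∏ l ∈ Iio j, |x j - x l| := by
        simp only [abs_prod]
    _ ≤ ∏ j : Fin n, ∏ _l ∈ Iio j, L := by gcongr with j _ l _; exact hx j l
    _ = L ^ (n * (n - 1) / 2) := by
        rw [← sum_range_id, ← Fin.sum_univ_eq_sum_range, ← prod_pow_eq_pow_sum]
        simp

theorem det_le_of_contDiffOn_general (μ : ℕ) (a L : ℝ) (hL : 0 ≤ L)
    (ψ : Fin μ → ℝ → ℝ)
    (hψ : ∀ i, ContDiffOn ℝ (μ - 1 : ℕ) (ψ i) (Set.Icc a (a + L)))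
    (x : Fin μ → ℝ) (hx : ∀ j, x j ∈ Set.Icc a (a + L))
    (σ : Fin μ → ℕ → ℝ)
    (hσ : ∀ i (p : ℕ) (ξ : ℝ), ξ ∈ Set.Icc a (a + L) →
      |iteratedDerivWithin p (ψ i) (Set.Icc a (a + L)) ξ| / (p.factorial : ℝ) ≤ σ i p) :
    |Matrix.det (Matrix.of fun i j => ψ i (x j))| ≤
      L ^ (μ * (μ - 1) / 2) *
        ∑ s : Equiv.Perm (Fin μ), ∏ i : Fin μ, σ i (s i) := by
  by_cases hinj : Function.Injective x
  · have hentry (i j : Fin μ) : |dividedDifference (Iic j) x (ψ i)| ≤ σ i j := by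
      have hψj : ContDiffOn ℝ (j : ℕ) (ψ i) (Icc a (a + L)) :=
        (hψ i).of_le (by exact_mod_cast Nat.le_sub_one_of_lt j.isLt)
      obtain ⟨ξ, hξ, h⟩ := exists_dividedDifference_eq_iteratedDerivWithin hinj.injOn
        (Fin.card_Iic j) (fun k _ => hx k) hψj
      rw [h, abs_div, Nat.abs_cast]
      exact hσ i j ξ hξ
    have hdet := Matrix.det_le_sum_prod (abv := AbsoluteValue.abs) hentry
    have hV := abs_prod_sub_le_pow fun j l => by
      simpa [Real.dist_eq] using Real.dist_le_of_mem_Icc (hx j) (hx l)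
    rw [det_eq_det_dividedDifference_mul_prod_sub ψ hinj, abs_mul, mul_comm]
    exact mul_le_mul hV hdet (abs_nonneg _) (pow_nonneg hL _)
  · obtain ⟨j, k, hxjk, hjk⟩ := Function.not_injective_iff.1 hinj
    rw [Matrix.det_zero_of_column_eq hjk fun i => by simp [hxjk], abs_zero]
    have hσ_nonneg (i : Fin μ) (p : ℕ) : 0 ≤ σ i p :=
      (div_nonneg (abs_nonneg _) p.factorial.cast_nonneg).trans (hσ i p (x j) (hx j))
    exact mul_nonneg (pow_nonneg hL _) (sum_nonneg fun s _ => prod_nonneg fun i _ => hσ_nonneg _ _)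

/-- Bombieri–Pila determinant bound: if `I = [a, a+L]` is an interval of length `L`,
`x_1, …, x_μ ∈ I`, and `ψ_1, …, ψ_μ : I → ℝ` are `C^{μ-1}`, then the determinant
`Δ = det (ψ i (x j))` satisfies
`|Δ| ≤ L^(μ(μ-1)/2) * ∑_{s ∈ S_μ} ∏_i σ_{i, s(i)}`,
where `σ i p` is any bound on `sup_{ξ ∈ I} |ψ_i^{(p)}(ξ)| / p!`. -/
theorem det_le_of_contDiffOn (μ : ℕ) (hμ : 1 ≤ μ) (a L : ℝ) (hL : 0 ≤ L)
    (ψ : Fin μ → ℝ → ℝ)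
    (hψ : ∀ i, ContDiffOn ℝ (μ - 1 : ℕ) (ψ i) (Set.Icc a (a + L)))
    (x : Fin μ → ℝ) (hx : ∀ j, x j ∈ Set.Icc a (a + L))
    (σ : Fin μ → ℕ → ℝ)
    (hσ : ∀ i (p : ℕ) (ξ : ℝ), ξ ∈ Set.Icc a (a + L) →
      |iteratedDerivWithin p (ψ i) (Set.Icc a (a + L)) ξ| / (p.factorial : ℝ) ≤ σ i p) :
    |Matrix.det (Matrix.of fun i j => ψ i (x j))| ≤
      L ^ (μ * (μ - 1) / 2) *
        ∑ s : Equiv.Perm (Fin μ), ∏ i : Fin μ, σ i (s i) :=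
  det_le_of_contDiffOn_general μ a L hL ψ hψ x hx σ hσ
end

section
/- Let a > 1 and let f, g : [a,∞) → ℝ be smooth functions such that for all x ≥ a and all p ∈ ℕ, |f^{(p)}(x)/p!| ≤ (A p^B (log x)^C / x)^p and similarly for g, where A, B, C ≥ 0. Then for any α = (α₁, α₂) ∈ ℕ² and any p ∈ ℕ and x ≥ a, |(f^{α₁} g^{α₂})^{(p)}(x)|/p! ≤ (p+1)^{α₁+α₂} A^p p^{Bp} (log x)^{Cp} / x^p. -/
open Set

private lemma slow_mul_aux {a A B C x : ℝ} (hx1 : 1 < x) (hxa : x ∈ Set.Ici a)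
    (hA : 0 ≤ A) (hB : 0 ≤ B)
    {u v : ℝ → ℝ} (hu : ContDiffOn ℝ (⊤ : ℕ∞) u (Set.Ici a)) (hv : ContDiffOn ℝ (⊤ : ℕ∞) v (Set.Ici a))
    {m l : ℕ}
    (hub : ∀ q : ℕ, |iteratedDerivWithin q u (Set.Ici a) x| / (q.factorial : ℝ) ≤
      ((q : ℝ) + 1) ^ m * (A * (q : ℝ) ^ B * Real.log x ^ C / x) ^ q)
    (hvb : ∀ q : ℕ, |iteratedDerivWithin q v (Set.Ici a) x| / (q.factorial : ℝ) ≤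
      ((q : ℝ) + 1) ^ l * (A * (q : ℝ) ^ B * Real.log x ^ C / x) ^ q)
    (p : ℕ) :
    |iteratedDerivWithin p (fun y => u y * v y) (Set.Ici a) x| / (p.factorial : ℝ) ≤
      ((p : ℝ) + 1) ^ (m + l + 1) * (A * (p : ℝ) ^ B * Real.log x ^ C / x) ^ p := by
  have hxpos : (0:ℝ) < x := lt_trans one_pos hx1
  have hL : 0 ≤ Real.log x := Real.log_nonneg hx1.le
  set K : ℕ → ℝ := fun q => A * (q : ℝ) ^ B * Real.log x ^ C / x with hK
  have hK0 : ∀ q, 0 ≤ K q := fun q =>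
    div_nonneg (mul_nonneg (mul_nonneg hA (Real.rpow_nonneg (Nat.cast_nonneg q) B))
      (Real.rpow_nonneg hL C)) hxpos.le
  have hKmono : ∀ i j : ℕ, i ≤ j → K i ≤ K j := by
    intro i j hij
    have : ((i:ℝ)) ^ B ≤ ((j:ℝ)) ^ B :=
      Real.rpow_le_rpow (Nat.cast_nonneg i) (by exact_mod_cast hij) hB
    simp only [hK]
    gcongr
  have Hle := norm_iteratedFDerivWithin_mul_le (𝕜 := ℝ) hu hv (uniqueDiffOn_Ici a) hxa
    (n := p) (by exact_mod_cast (le_top : (p : ℕ∞) ≤ ⊤))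
  have habs : |iteratedDerivWithin p (fun y => u y * v y) (Set.Ici a) x| =
      ‖iteratedFDerivWithin ℝ p (fun y => u y * v y) (Set.Ici a) x‖ := by
    rw [norm_iteratedFDerivWithin_eq_norm_iteratedDerivWithin, Real.norm_eq_abs]
  have hfac : (0:ℝ) < (p.factorial : ℝ) := by exact_mod_cast p.factorial_pos
  rw [habs, div_le_iff₀ hfac]
  refine Hle.trans ?_
  have hterm : ∀ i ∈ Finset.range (p + 1),
      (p.choose i : ℝ) * ‖iteratedFDerivWithin ℝ i u (Set.Ici a) x‖ *
        ‖iteratedFDerivWithin ℝ (p - i) v (Set.Ici a) x‖ ≤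
      (((p : ℝ) + 1) ^ (m + l) * K p ^ p) * (p.factorial : ℝ) := by
    intro i hi
    have hi' : i ≤ p := Nat.lt_succ_iff.mp (Finset.mem_range.mp hi)
    have hCh : (p.choose i : ℝ) = (p.factorial : ℝ) / ((i.factorial : ℝ) * ((p - i).factorial : ℝ)) :=
      Nat.cast_choose ℝ hi'
    have hif : ((i.factorial : ℝ)) ≠ 0 := Nat.cast_ne_zero.mpr i.factorial_ne_zero
    have hpif : (((p - i).factorial : ℝ)) ≠ 0 := Nat.cast_ne_zero.mpr (p - i).factorial_ne_zero
    have heq : (p.choose i : ℝ) * ‖iteratedFDerivWithin ℝ i u (Set.Ici a) x‖ *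
        ‖iteratedFDerivWithin ℝ (p - i) v (Set.Ici a) x‖ =
        ((|iteratedDerivWithin i u (Set.Ici a) x| / (i.factorial : ℝ)) *
          (|iteratedDerivWithin (p - i) v (Set.Ici a) x| / ((p - i).factorial : ℝ))) *
          (p.factorial : ℝ) := by
      rw [norm_iteratedFDerivWithin_eq_norm_iteratedDerivWithin,
        norm_iteratedFDerivWithin_eq_norm_iteratedDerivWithin, Real.norm_eq_abs,
        Real.norm_eq_abs, hCh]
      field_simp
    rw [heq]
    have h1 := hub i
    have h2 := hvb (p - i)
    have hb1 : |iteratedDerivWithin i u (Set.Ici a) x| / (i.factorial : ℝ) ≤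
        ((i : ℝ) + 1) ^ m * K i ^ i := h1
    have hb2 : |iteratedDerivWithin (p - i) v (Set.Ici a) x| / ((p - i).factorial : ℝ) ≤
        (((p - i : ℕ) : ℝ) + 1) ^ l * K (p - i) ^ (p - i) := h2
    have hnn1 : (0:ℝ) ≤ |iteratedDerivWithin i u (Set.Ici a) x| / (i.factorial : ℝ) := by positivity
    have hnn2 : (0:ℝ) ≤ |iteratedDerivWithin (p - i) v (Set.Ici a) x| / ((p - i).factorial : ℝ) :=
      by positivity
    have hstep : (((i : ℝ) + 1) ^ m * K i ^ i) * ((((p - i : ℕ) : ℝ) + 1) ^ l * K (p - i) ^ (p - i)) ≤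
        ((p : ℝ) + 1) ^ (m + l) * K p ^ p := by
      have e1 : ((i : ℝ) + 1) ^ m ≤ ((p : ℝ) + 1) ^ m := by
        gcongr <;> exact_mod_cast hi'
      have e2 : K i ^ i ≤ K p ^ i := pow_le_pow_left₀ (hK0 i) (hKmono i p hi') i
      have e3 : (((p - i : ℕ) : ℝ) + 1) ^ l ≤ ((p : ℝ) + 1) ^ l := by
        gcongr <;> exact_mod_cast Nat.sub_le p i
      have e4 : K (p - i) ^ (p - i) ≤ K p ^ (p - i) :=
        pow_le_pow_left₀ (hK0 _) (hKmono _ p (Nat.sub_le p i)) _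
      calc (((i : ℝ) + 1) ^ m * K i ^ i) * ((((p - i : ℕ) : ℝ) + 1) ^ l * K (p - i) ^ (p - i))
          ≤ (((p : ℝ) + 1) ^ m * K p ^ i) * (((p : ℝ) + 1) ^ l * K p ^ (p - i)) := by
            apply mul_le_mul (mul_le_mul e1 e2 (pow_nonneg (hK0 i) i) (by positivity))
              (mul_le_mul e3 e4 (pow_nonneg (hK0 _) _) (by positivity)) (by positivity)
              (by positivity)
        _ = ((p : ℝ) + 1) ^ (m + l) * K p ^ p := by
            rw [mul_mul_mul_comm, ← pow_add, ← pow_add, Nat.add_sub_cancel' hi']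
    exact mul_le_mul_of_nonneg_right
      ((mul_le_mul hb1 hb2 hnn2 (le_trans hnn1 hb1)).trans hstep) hfac.le
  refine (Finset.sum_le_sum hterm).trans ?_
  rw [Finset.sum_const, Finset.card_range, nsmul_eq_mul]
  have : ((p:ℝ) + 1) ^ (m + l + 1) = ((p:ℝ)+1) * ((p:ℝ)+1)^(m+l) := by ring
  push_cast
  rw [this]
  exact le_of_eq (by simp only [hK]; ring)

private lemma slow_pow_aux {a A B C x : ℝ} (hx1 : 1 < x) (hxa : x ∈ Set.Ici a)
    (hA : 0 ≤ A) (hB : 0 ≤ B)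
    {h : ℝ → ℝ} (hh : ContDiffOn ℝ (⊤ : ℕ∞) h (Set.Ici a))
    (hhb : ∀ q : ℕ, |iteratedDerivWithin q h (Set.Ici a) x| / (q.factorial : ℝ) ≤
      (A * (q : ℝ) ^ B * Real.log x ^ C / x) ^ q)
    (α : ℕ) (p : ℕ) :
    |iteratedDerivWithin p (fun y => h y ^ α) (Set.Ici a) x| / (p.factorial : ℝ) ≤
      ((p : ℝ) + 1) ^ (α - 1) * (A * (p : ℝ) ^ B * Real.log x ^ C / x) ^ p := by
  have hxpos : (0:ℝ) < x := lt_trans one_pos hx1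
  have hL : 0 ≤ Real.log x := Real.log_nonneg hx1.le
  have hK0 : ∀ q : ℕ, (0:ℝ) ≤ A * (q : ℝ) ^ B * Real.log x ^ C / x := fun q =>
    div_nonneg (mul_nonneg (mul_nonneg hA (Real.rpow_nonneg (Nat.cast_nonneg q) B))
      (Real.rpow_nonneg hL C)) hxpos.le
  induction α generalizing p with
  | zero =>
    simp only [pow_zero, Nat.zero_sub, _root_.pow_zero, one_mul]
    cases p with
    | zero => simp
    | succ n =>
      have hz : iteratedDerivWithin (n + 1) (fun _ : ℝ => (1:ℝ)) (Set.Ici a) x = 0 := by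
        have := iteratedFDerivWithin_const_of_ne (𝕜 := ℝ) (Nat.succ_ne_zero n : n + 1 ≠ 0) (1:ℝ)
          (Set.Ici a)
        have hn : ‖iteratedDerivWithin (n + 1) (fun _ : ℝ => (1:ℝ)) (Set.Ici a) x‖ = 0 := by
          rw [← norm_iteratedFDerivWithin_eq_norm_iteratedDerivWithin, this]; simp
        simpa using hn
      rw [hz]
      simp only [abs_zero, zero_div]
      positivity
  | succ n ih =>
    cases n with
    | zero =>
      have hfun : (fun y => h y ^ (0 + 1)) = h := by funext y; simp
      rw [hfun]
      simpa using hhb p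
    | succ k =>
      have hfun : (fun y => h y ^ (k + 1 + 1)) = fun y => h y ^ (k + 1) * h y := by
        funext y; rw [pow_succ]
      rw [hfun]
      have hub : ∀ q : ℕ, |iteratedDerivWithin q (fun y => h y ^ (k + 1)) (Set.Ici a) x| /
          (q.factorial : ℝ) ≤
          ((q : ℝ) + 1) ^ k * (A * (q : ℝ) ^ B * Real.log x ^ C / x) ^ q := by
        intro q; simpa using ih q
      have hvb : ∀ q : ℕ, |iteratedDerivWithin q h (Set.Ici a) x| / (q.factorial : ℝ) ≤
          ((q : ℝ) + 1) ^ 0 * (A * (q : ℝ) ^ B * Real.log x ^ C / x) ^ q := by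
        intro q; simpa using hhb q
      have := slow_mul_aux hx1 hxa hA hB (hh.pow (k + 1)) hh hub hvb p
      simpa using this


/-- If `f, g` are smooth on `[a,∞)` (with `a > 1`) and slow with data `A, B, C`, i.e.
`|f^{(p)}(x)/p!| ≤ (A p^B (log x)^C / x)^p` (and similarly for `g`), then for any
`α = (α₁, α₂) ∈ ℕ²`, `p ∈ ℕ` and `x ≥ a`,
`|(f^{α₁} g^{α₂})^{(p)}(x)|/p! ≤ (p+1)^{α₁+α₂} A^p p^{Bp} (log x)^{Cp} / x^p`. -/
theorem iteratedDerivWithin_pow_mul_pow_le (a A B C : ℝ) (ha : 1 < a)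
    (hA : 0 ≤ A) (hB : 0 ≤ B) (hC : 0 ≤ C)
    (f g : ℝ → ℝ)
    (hf : ContDiffOn ℝ (⊤ : ℕ∞) f (Set.Ici a)) (hg : ContDiffOn ℝ (⊤ : ℕ∞) g (Set.Ici a))
    (hfb : ∀ (p : ℕ), ∀ x ≥ a,
      |iteratedDerivWithin p f (Set.Ici a) x| / (p.factorial : ℝ) ≤
        (A * (p : ℝ) ^ B * Real.log x ^ C / x) ^ p)
    (hgb : ∀ (p : ℕ), ∀ x ≥ a,
      |iteratedDerivWithin p g (Set.Ici a) x| / (p.factorial : ℝ) ≤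
        (A * (p : ℝ) ^ B * Real.log x ^ C / x) ^ p)
    (α₁ α₂ p : ℕ) (x : ℝ) (hx : a ≤ x) :
    |iteratedDerivWithin p (fun y => f y ^ α₁ * g y ^ α₂) (Set.Ici a) x| / (p.factorial : ℝ) ≤
      ((p : ℝ) + 1) ^ (α₁ + α₂) * A ^ p * (p : ℝ) ^ (B * p) *
        Real.log x ^ (C * p) / x ^ p := by
  have hx1 : 1 < x := lt_of_lt_of_le ha hx
  have hxa : x ∈ Set.Ici a := hx
  have hxpos : (0:ℝ) < x := lt_trans one_pos hx1
  have hL : 0 ≤ Real.log x := Real.log_nonneg hx1.le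
  have hKp : (A * (p : ℝ) ^ B * Real.log x ^ C / x) ^ p =
      A ^ p * (p : ℝ) ^ (B * p) * Real.log x ^ (C * p) / x ^ p := by
    have h1 : ((p:ℝ) ^ B) ^ p = (p : ℝ) ^ (B * (p:ℝ)) := by
      rw [← Real.rpow_natCast ((p:ℝ) ^ B) p, ← Real.rpow_mul (Nat.cast_nonneg p)]
    have h2 : (Real.log x ^ C) ^ p = Real.log x ^ (C * (p:ℝ)) := by
      rw [← Real.rpow_natCast (Real.log x ^ C) p, ← Real.rpow_mul hL]
    rw [div_pow, mul_pow, mul_pow, h1, h2]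
  have hRHSeq : ((p : ℝ) + 1) ^ (α₁ + α₂) * A ^ p * (p : ℝ) ^ (B * p) *
      Real.log x ^ (C * p) / x ^ p =
      ((p : ℝ) + 1) ^ (α₁ + α₂) * (A * (p : ℝ) ^ B * Real.log x ^ C / x) ^ p := by
    rw [hKp]; ring
  rw [hRHSeq]
  rcases Nat.eq_zero_or_pos (α₁ + α₂) with hzero | hpos
  · obtain ⟨h1, h2⟩ := Nat.add_eq_zero.mp hzero
    subst h1; subst h2
    simp only [Nat.zero_add, _root_.pow_zero, one_mul, mul_one]
    cases p with
    | zero => simp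
    | succ n =>
      have hz : iteratedDerivWithin (n + 1) (fun _ : ℝ => (1:ℝ)) (Set.Ici a) x = 0 := by
        have h0 := iteratedFDerivWithin_const_of_ne (𝕜 := ℝ) (Nat.succ_ne_zero n : n + 1 ≠ 0) (1:ℝ)
          (Set.Ici a)
        have hn : ‖iteratedDerivWithin (n + 1) (fun _ : ℝ => (1:ℝ)) (Set.Ici a) x‖ = 0 := by
          rw [← norm_iteratedFDerivWithin_eq_norm_iteratedDerivWithin, h0]; simp
        simpa using hn
      rw [hz]
      simp only [abs_zero, zero_div]
      have hK0 : (0:ℝ) ≤ A * ((n + 1 : ℕ) : ℝ) ^ B * Real.log x ^ C / x :=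
        div_nonneg (mul_nonneg (mul_nonneg hA (Real.rpow_nonneg (Nat.cast_nonneg _) B))
          (Real.rpow_nonneg hL C)) hxpos.le
      exact pow_nonneg hK0 _
  · have hub := slow_pow_aux hx1 hxa hA hB hf (fun q => hfb q x hx) α₁
    have hvb := slow_pow_aux hx1 hxa hA hB hg (fun q => hgb q x hx) α₂
    have := slow_mul_aux hx1 hxa hA hB (hf.pow α₁) (hg.pow α₂) hub hvb p
    refine this.trans ?_
    have hmono : ((p : ℝ) + 1) ^ ((α₁ - 1) + (α₂ - 1) + 1) ≤ ((p : ℝ) + 1) ^ (α₁ + α₂) := by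
      apply pow_le_pow_right₀ (le_add_of_nonneg_left (Nat.cast_nonneg p))
      omega
    have hK0 : (0:ℝ) ≤ A * (p : ℝ) ^ B * Real.log x ^ C / x :=
      div_nonneg (mul_nonneg (mul_nonneg hA (Real.rpow_nonneg (Nat.cast_nonneg _) B))
        (Real.rpow_nonneg hL C)) hxpos.le
    exact mul_le_mul_of_nonneg_right hmono (pow_nonneg hK0 p)
end

section
/- For every integer ℓ ≥ 1, every integer p ≥ 1, and every real x ≥ e, one has |((log)^ℓ)^{(p)}(x)|/p! ≤ 2^ℓ p^ℓ (log x)^{ℓ-1} / x^p, where (log)^ℓ denotes the ℓ-th power of the logarithm, x ↦ (log x)^ℓ. -/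
/-!
Write `L = log x ≥ 1`. Since `log^(i+1) = ± i! / x^(i+1)`, the Leibniz formula for
`log^(n+2) = log · log^(n+1)` lets one prove by induction on `n` that, for `p ≥ 1`,
`|(log^(n+1))^(p)(x)| ≤ p! (p+1)^n L^n / |x|^p`: the term `i = 0` is `L` times the induction
hypothesis, and each term `i ≥ 1` is at most `p! (p+1)^n L^(n+1) / |x|^p` because
`C(p,i) (i-1)! (p-i)! ≤ p!`. Finally `(p+1)^(ℓ-1) ≤ (2p)^ℓ`.
-/

open Real Finset
open scoped Nat

theorem Real.abs_iteratedDeriv_succ_log (m : ℕ) (x : ℝ) :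
    |iteratedDeriv (m + 1) log x| = m ! / |x| ^ (m + 1) := by
  rw [iteratedDeriv_succ', deriv_log', iteratedDeriv_eq_iterate, iter_deriv_inv, abs_mul,
    abs_mul, abs_pow, abs_neg, abs_one, one_pow, one_mul, Nat.abs_cast, abs_zpow,
    show (-1 - m : ℤ) = -((m + 1 : ℕ) : ℤ) by push_cast; ring, zpow_neg, zpow_natCast,
    div_eq_mul_inv]

theorem Nat.choose_mul_factorial_pred_mul_factorial_le {p i : ℕ} (hi : i ≤ p) :
    p.choose i * (i - 1)! * (p - i)! ≤ p ! :=
  calc p.choose i * (i - 1)! * (p - i)! ≤ p.choose i * i ! * (p - i)! := by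
        gcongr; exact Nat.sub_le i 1
    _ = p ! := Nat.choose_mul_factorial_mul_factorial hi

theorem Real.abs_choose_mul_iteratedDeriv_succ_log_mul_le {g : ℝ → ℝ} {x C : ℝ} {n p i : ℕ}
    (hip : i + 1 ≤ p) (hC : 0 ≤ C)
    (hg : ∀ q : ℕ, |iteratedDeriv q g x| ≤ q ! * (q + 1) ^ n * C / |x| ^ q) :
    |p.choose (i + 1) * iteratedDeriv (i + 1) log x * iteratedDeriv (p - (i + 1)) g x| ≤
      p ! * (p + 1) ^ n * C / |x| ^ p := by
  rw [abs_mul, abs_mul, Nat.abs_cast, abs_iteratedDeriv_succ_log]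
  calc (p.choose (i + 1) : ℝ) * (i ! / |x| ^ (i + 1)) * |iteratedDeriv (p - (i + 1)) g x|
      ≤ p.choose (i + 1) * (i ! / |x| ^ (i + 1)) *
          ((p - (i + 1))! * ((p - (i + 1) : ℕ) + 1) ^ n * C / |x| ^ (p - (i + 1))) := by
        gcongr; exact hg _
    _ = (p.choose (i + 1) * i ! * (p - (i + 1))! : ℕ) * ((p - (i + 1) : ℕ) + 1) ^ n * C /
          (|x| ^ (i + 1) * |x| ^ (p - (i + 1))) := by
        push_cast
        field_simp
    _ ≤ p ! * (p + 1) ^ n * C / |x| ^ p := by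
      rw [← pow_add, Nat.add_sub_cancel' hip]
      gcongr
      · exact_mod_cast Nat.choose_mul_factorial_pred_mul_factorial_le hip
      · exact_mod_cast Nat.sub_le p (i + 1)

theorem Real.abs_iteratedDeriv_log_pow_succ_le {x : ℝ} (hx : 1 ≤ log x) (n : ℕ) {p : ℕ}
    (hp : 1 ≤ p) :
    |iteratedDeriv p (fun y => log y ^ (n + 1)) x| ≤
      p ! * (p + 1) ^ n * log x ^ n / |x| ^ p := by
  induction n generalizing p with
  | zero =>
    obtain ⟨m, rfl⟩ := Nat.exists_eq_add_of_le' hp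
    simp only [pow_one, pow_zero, mul_one, zero_add]
    rw [abs_iteratedDeriv_succ_log]
    gcongr
    exact m.le_succ
  | succ n ih =>
    have hx0 : x ≠ 0 := by rintro rfl; norm_num at hx
    have hlog : ContDiffAt ℝ p log x := contDiffAt_log.2 hx0
    have hL : 0 ≤ log x := zero_le_one.trans hx
    -- The case `q = 0` is why the exponent of `log x` goes up to `n + 1` here.
    have weak_bound (q : ℕ) : |iteratedDeriv q (fun y => log y ^ (n + 1)) x| ≤
        q ! * (q + 1) ^ n * log x ^ (n + 1) / |x| ^ q := by
      rcases q.eq_zero_or_pos with rfl | hq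
      · simp [abs_of_nonneg hL]
      · refine (ih hq).trans ?_
        gcongr
        exact n.le_succ
    set M : ℝ := p ! * (p + 1) ^ n * log x ^ (n + 1) / |x| ^ p
    have term (i : ℕ) (hi : i ∈ range (p + 1)) :
        |p.choose i * iteratedDeriv i log x * iteratedDeriv (p - i) (fun y => log y ^ (n + 1)) x|
          ≤ M := by
      rcases i with _ | i
      · rw [abs_mul, abs_mul, Nat.abs_cast]
        simp only [Nat.choose_zero_right, Nat.cast_one, iteratedDeriv_zero, one_mul,
          Nat.sub_zero, abs_of_nonneg hL]
        calc log x * |iteratedDeriv p (fun y => log y ^ (n + 1)) x|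
            ≤ log x * (p ! * (p + 1) ^ n * log x ^ n / |x| ^ p) := by gcongr; exact ih hp
          _ = M := by ring
      · exact abs_choose_mul_iteratedDeriv_succ_log_mul_le
          (Nat.lt_succ_iff.1 (mem_range.1 hi)) (pow_nonneg hL _) weak_bound
    calc |iteratedDeriv p (fun y => log y ^ (n + 1 + 1)) x|
        = |∑ i ∈ range (p + 1),
            p.choose i * iteratedDeriv i log x *
              iteratedDeriv (p - i) (fun y => log y ^ (n + 1)) x| := by
          simp_rw [pow_succ' (log _) (n + 1)]
          rw [iteratedDeriv_fun_mul hlog (hlog.pow _)]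
      _ ≤ ∑ i ∈ range (p + 1), M := (abs_sum_le_sum_abs _ _).trans (sum_le_sum term)
      _ = p ! * (p + 1) ^ (n + 1) * log x ^ (n + 1) / |x| ^ p := by
        rw [sum_const, card_range, nsmul_eq_mul]
        push_cast
        ring

/-- For every integer `ℓ ≥ 1`, every integer `p ≥ 1` and every real `x ≥ e`,
`|((log)^ℓ)^{(p)}(x)|/p! ≤ 2^ℓ p^ℓ (log x)^{ℓ-1} / x^p`. -/
theorem iteratedDeriv_log_pow_le (ℓ p : ℕ) (hℓ : 1 ≤ ℓ) (hp : 1 ≤ p)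
    (x : ℝ) (hx : Real.exp 1 ≤ x) :
    |iteratedDeriv p (fun y => Real.log y ^ ℓ) x| / (p.factorial : ℝ) ≤
      2 ^ ℓ * (p : ℝ) ^ ℓ * Real.log x ^ (ℓ - 1) / x ^ p := by
  obtain ⟨n, rfl⟩ := Nat.exists_eq_add_of_le' hℓ
  have hx0 : 0 < x := (exp_pos 1).trans_le hx
  have hlog : 1 ≤ log x := (le_log_iff_exp_le hx0).2 hx
  have hp1 : (1 : ℝ) ≤ p := by exact_mod_cast hp
  have hpow : ((p : ℝ) + 1) ^ n ≤ (2 * p) ^ (n + 1) :=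
    (pow_le_pow_left₀ (by positivity) (by linarith) n).trans
      (pow_le_pow_right₀ (by linarith) n.le_succ)
  rw [Nat.add_sub_cancel, div_le_iff₀ (by positivity)]
  calc |iteratedDeriv p (fun y => log y ^ (n + 1)) x|
      ≤ p ! * (p + 1) ^ n * log x ^ n / x ^ p := by
        simpa only [abs_of_pos hx0] using abs_iteratedDeriv_log_pow_succ_le hlog n hp
    _ ≤ p ! * (2 * p) ^ (n + 1) * log x ^ n / x ^ p := by gcongr
    _ = 2 ^ (n + 1) * p ^ (n + 1) * log x ^ n / x ^ p * p ! := by ring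
end

section
/- Let f : [d,∞) → ℝ be smooth with |f^{(p)}(x)| ≤ α^p for all x ≥ d and all p ≥ 0, for some α ≥ 1, and let s : [e,∞) → [d,∞) be smooth with |s^{(p)}(x)/p!| ≤ (A p^B (log x)^C/x)^p for all p ≥ 1 and x ≥ e. Then for all p ≥ 1 and x ≥ e, |(f ∘ s)^{(p)}(x)|/p! ≤ α^p A^p p^{(B+1)p} (log x)^{Cp}/x^p. -/
/-- Let `f : [d,∞) → ℝ` be smooth with `|f^{(p)}(x)| ≤ α^p` (`α ≥ 1`), and let
`s : [e,∞) → [d,∞)` be smooth with `|s^{(p)}(x)/p!| ≤ (A p^B (log x)^C / x)^p`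
for `p ≥ 1`, `x ≥ e`.  Then for all `p ≥ 1` and `x ≥ e`,
`|(f ∘ s)^{(p)}(x)|/p! ≤ α^p A^p p^{(B+1)p} (log x)^{Cp} / x^p`. -/
theorem iteratedDerivWithin_comp_slow_le (d α A B C : ℝ) (hα : 1 ≤ α)
    (hA : 0 ≤ A) (hB : 0 ≤ B) (hC : 0 ≤ C)
    (f s : ℝ → ℝ)
    (hf : ContDiffOn ℝ (⊤ : ℕ∞) f (Set.Ici d))
    (hfb : ∀ (p : ℕ), ∀ x ≥ d, |iteratedDerivWithin p f (Set.Ici d) x| ≤ α ^ p)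
    (hs : ContDiffOn ℝ (⊤ : ℕ∞) s (Set.Ici (Real.exp 1)))
    (hrange : ∀ x ≥ Real.exp 1, s x ∈ Set.Ici d)
    (hsb : ∀ (p : ℕ), 1 ≤ p → ∀ x ≥ Real.exp 1,
      |iteratedDerivWithin p s (Set.Ici (Real.exp 1)) x| / (p.factorial : ℝ) ≤
        (A * (p : ℝ) ^ B * Real.log x ^ C / x) ^ p)
    (p : ℕ) (hp : 1 ≤ p) (x : ℝ) (hx : Real.exp 1 ≤ x) :
    |iteratedDerivWithin p (f ∘ s) (Set.Ici (Real.exp 1)) x| / (p.factorial : ℝ) ≤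
      α ^ p * A ^ p * (p : ℝ) ^ ((B + 1) * p) * Real.log x ^ (C * p) / x ^ p := by
  have hx0 : (0:ℝ) < x := lt_of_lt_of_le (Real.exp_pos 1) hx
  have hL : (1:ℝ) ≤ Real.log x := by
    rw [Real.le_log_iff_exp_le hx0]; exact hx
  have hL0 : (0:ℝ) ≤ Real.log x := le_trans zero_le_one hL
  set L := Real.log x with hLdef
  have hp1 : (1:ℝ) ≤ (p:ℝ) := by exact_mod_cast hp
  set D : ℝ := A * (p:ℝ) ^ (B + 1) * L ^ C / x with hDdef
  have hD0 : 0 ≤ D := by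
    apply div_nonneg _ hx0.le
    exact mul_nonneg (mul_nonneg hA (Real.rpow_nonneg (by positivity) _))
      (Real.rpow_nonneg hL0 _)
  have key : ‖iteratedFDerivWithin ℝ p (f ∘ s) (Set.Ici (Real.exp 1)) x‖ ≤
      (p.factorial : ℝ) * α ^ p * D ^ p := by
    apply norm_iteratedFDerivWithin_comp_le hf hs (by exact_mod_cast le_top) (uniqueDiffOn_Ici d)
      (uniqueDiffOn_Ici _) (fun y hy => hrange y hy) (Set.mem_Ici.2 hx)
    · intro i hi
      rw [norm_iteratedFDerivWithin_eq_norm_iteratedDerivWithin]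
      calc ‖iteratedDerivWithin i f (Set.Ici d) (s x)‖ ≤ α ^ i :=
            hfb i (s x) (hrange x hx)
        _ ≤ α ^ p := pow_le_pow_right₀ hα hi
    · intro i hi1 hip
      rw [norm_iteratedFDerivWithin_eq_norm_iteratedDerivWithin]
      have hi1' : (1:ℝ) ≤ (i:ℝ) := by exact_mod_cast hi1
      have hip' : (i:ℝ) ≤ (p:ℝ) := by exact_mod_cast hip
      have h1 : |iteratedDerivWithin i s (Set.Ici (Real.exp 1)) x| ≤
          (i.factorial : ℝ) * (A * (i:ℝ) ^ B * L ^ C / x) ^ i := by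
        have := hsb i hi1 x hx
        rw [div_le_iff₀ (by positivity)] at this
        linarith [this]
      have hfact : (i.factorial : ℝ) ≤ (i:ℝ) ^ i := by
        exact_mod_cast Nat.factorial_le_pow i
      have hbase0 : (0:ℝ) ≤ A * (i:ℝ) ^ B * L ^ C / x := by
        apply div_nonneg _ hx0.le
        exact mul_nonneg (mul_nonneg hA (Real.rpow_nonneg (by positivity) _))
          (Real.rpow_nonneg hL0 _)
      have h2 : (i.factorial : ℝ) * (A * (i:ℝ) ^ B * L ^ C / x) ^ i ≤
          ((i:ℝ) * (A * (i:ℝ) ^ B * L ^ C / x)) ^ i := by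
        rw [mul_pow]
        exact mul_le_mul_of_nonneg_right hfact (pow_nonneg hbase0 i)
      have h3 : (i:ℝ) * (A * (i:ℝ) ^ B * L ^ C / x) ≤ D := by
        rw [hDdef]
        have hi0 : (0:ℝ) < (i:ℝ) := lt_of_lt_of_le zero_lt_one hi1'
        have : (i:ℝ) * (A * (i:ℝ) ^ B * L ^ C / x)
            = A * (i:ℝ) ^ (B + 1) * L ^ C / x := by
          rw [Real.rpow_add hi0, Real.rpow_one]
          ring
        rw [this]
        gcongr
      calc ‖iteratedDerivWithin i s (Set.Ici (Real.exp 1)) x‖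
          ≤ ((i:ℝ) * (A * (i:ℝ) ^ B * L ^ C / x)) ^ i := le_trans h1 h2
        _ ≤ D ^ i := pow_le_pow_left₀ (by positivity) h3 i
  rw [norm_iteratedFDerivWithin_eq_norm_iteratedDerivWithin] at key
  have hfp : (0:ℝ) < (p.factorial : ℝ) := by exact_mod_cast p.factorial_pos
  rw [div_le_iff₀ hfp]
  have hDp : D ^ p = A ^ p * (p : ℝ) ^ ((B + 1) * p) * L ^ (C * p) / x ^ p := by
    rw [hDdef, div_pow, mul_pow, mul_pow, ← Real.rpow_natCast ((p:ℝ) ^ (B+1)) p,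
      ← Real.rpow_natCast (L ^ C) p, ← Real.rpow_mul (by positivity),
      ← Real.rpow_mul hL0]
  calc ‖iteratedDerivWithin p (f ∘ s) (Set.Ici (Real.exp 1)) x‖
      ≤ (p.factorial : ℝ) * α ^ p * D ^ p := key
    _ = α ^ p * A ^ p * (p : ℝ) ^ ((B + 1) * p) * L ^ (C * p) / x ^ p * (p.factorial : ℝ) := by
        rw [hDp]; ring
end

section
/- For every integer ℓ ≥ 1, every real α ≥ 1, every smooth function f : ℝ → ℝ with |f^{(p)}(y)| ≤ α^p for all y and p, every p ≥ 1, and every x ≥ e, one has |(f ∘ (log)^ℓ)^{(p)}(x)|/p! ≤ (α 2^ℓ)^p p^{(ℓ+1)p} (log x)^{p(ℓ-1)}/x^p. -/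
open Real Set

theorem iterLog (n : ℕ) : ∀ x : ℝ, 0 < x →
    iteratedDeriv (n + 1) Real.log x = (-1) ^ n * n.factorial / x ^ (n + 1) := by
  induction n with
  | zero => intro x hx; simp [iteratedDeriv_one, Real.deriv_log]
  | succ n ih =>
    intro x hx
    rw [iteratedDeriv_succ]
    have hE : iteratedDeriv (n + 1) Real.log =ᶠ[nhds x]
        fun y => (-1) ^ n * (n.factorial : ℝ) / y ^ (n + 1) := by
      filter_upwards [eventually_gt_nhds hx] with y hy using ih y hy
    rw [hE.deriv_eq]
    have h1 : HasDerivAt (fun y : ℝ => (-1) ^ n * (n.factorial : ℝ) / y ^ (n + 1))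
        ((-1) ^ n * (n.factorial : ℝ) * (-(↑(n + 1) * x ^ (n + 1 - 1)) / (x ^ (n + 1)) ^ 2)) x := by
      simpa [div_eq_mul_inv, mul_assoc] using
        (((hasDerivAt_pow (n + 1) x).inv (pow_ne_zero _ hx.ne')).const_mul
          ((-1) ^ n * (n.factorial : ℝ)))
    rw [h1.deriv]
    have hxne : x ≠ 0 := hx.ne'
    rw [Nat.factorial_succ]
    push_cast
    field_simp
    ring

theorem iterPow (ℓ : ℕ) : ∀ j : ℕ, iteratedDeriv j (fun t : ℝ => t ^ ℓ) =
    fun t => (ℓ.descFactorial j : ℝ) * t ^ (ℓ - j) := by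
  intro j
  induction j with
  | zero => simp
  | succ j ih =>
    rw [iteratedDeriv_succ, ih]
    funext t
    rw [deriv_const_mul _ (differentiable_pow _ t), deriv_pow_field]
    have h : ℓ - (j + 1) = ℓ - j - 1 := by omega
    rw [h, Nat.descFactorial_succ]
    push_cast
    ring

/-- For every `ℓ ≥ 1`, `α ≥ 1`, every smooth `f : ℝ → ℝ` with `|f^{(p)}(y)| ≤ α^p`
for all `y` and `p`, every `p ≥ 1` and every `x ≥ e`,
`|(f ∘ (log)^ℓ)^{(p)}(x)|/p! ≤ (α 2^ℓ)^p p^{(ℓ+1)p} (log x)^{p(ℓ-1)} / x^p`. -/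
theorem iteratedDeriv_comp_log_pow_le (ℓ : ℕ) (hℓ : 1 ≤ ℓ) (α : ℝ) (hα : 1 ≤ α)
    (f : ℝ → ℝ) (hf : ContDiff ℝ (⊤ : ℕ∞) f)
    (hfb : ∀ (p : ℕ) (y : ℝ), |iteratedDeriv p f y| ≤ α ^ p)
    (p : ℕ) (hp : 1 ≤ p) (x : ℝ) (hx : Real.exp 1 ≤ x) :
    |iteratedDeriv p (fun y => f (Real.log y ^ ℓ)) x| / (p.factorial : ℝ) ≤
      (α * 2 ^ ℓ) ^ p * (p : ℝ) ^ ((ℓ + 1) * p) * Real.log x ^ (p * (ℓ - 1)) / x ^ p := by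
  have hx0 : (0 : ℝ) < x := lt_of_lt_of_le (Real.exp_pos 1) hx
  set t := Real.log x with ht
  have ht1 : 1 ≤ t := (Real.le_log_iff_exp_le hx0).2 hx
  have ht0 : 0 < t := lt_of_lt_of_le one_pos ht1
  set g : ℝ → ℝ := fun s => f (s ^ ℓ) with hg
  have hgc : ContDiff ℝ (⊤ : ℕ∞) g := hf.comp (contDiff_id.pow ℓ)
  set D1 : ℝ := ℓ * t ^ (ℓ - 1) with hD1
  have hD1_1 : 1 ≤ D1 := by
    have : (1 : ℝ) ≤ (ℓ : ℝ) := by exact_mod_cast hℓ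
    have h2 : (1 : ℝ) ≤ t ^ (ℓ - 1) := one_le_pow₀ ht1
    calc (1 : ℝ) = 1 * 1 := by ring
      _ ≤ ℓ * t ^ (ℓ - 1) := by gcongr
  set C : ℝ := p.factorial * α ^ p * D1 ^ p with hC
  have hα0 : (0 : ℝ) < α := lt_of_lt_of_le one_pos hα
  -- inner bound : the derivatives of g are bounded by C
  have hg_bound : ∀ i, i ≤ p → ‖iteratedFDeriv ℝ i g t‖ ≤ C := by
    intro i hi
    have h1 : ‖iteratedFDeriv ℝ i g t‖ ≤ i.factorial * α ^ i * D1 ^ i := by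
      have hpw : ContDiff ℝ (⊤ : ℕ∞) (fun s : ℝ => s ^ ℓ) := contDiff_id.pow ℓ
      apply norm_iteratedFDeriv_comp_le hf hpw (by exact_mod_cast le_top)
      · intro j hj
        rw [norm_iteratedFDeriv_eq_norm_iteratedDeriv]
        calc |iteratedDeriv j f ((t : ℝ) ^ ℓ)| ≤ α ^ j := hfb j _
          _ ≤ α ^ i := pow_le_pow_right₀ hα hj
      · intro j hj1 hji
        rw [norm_iteratedFDeriv_eq_norm_iteratedDeriv, iterPow ℓ j]
        have hd : (ℓ.descFactorial j : ℝ) ≤ (ℓ : ℝ) ^ j := by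
          exact_mod_cast Nat.descFactorial_le_pow ℓ j
        have hexp : t ^ (ℓ - j) ≤ (t ^ (ℓ - 1)) ^ j := by
          rw [← pow_mul]
          apply pow_le_pow_right₀ ht1
          rcases le_or_gt j ℓ with h | h
          · calc ℓ - j ≤ ℓ - 1 := by omega
              _ ≤ (ℓ - 1) * j := Nat.le_mul_of_pos_right _ hj1
          · simp [Nat.sub_eq_zero_of_le h.le]
        have habs : |(ℓ.descFactorial j : ℝ) * t ^ (ℓ - j)|
            = (ℓ.descFactorial j : ℝ) * t ^ (ℓ - j) := by
          apply abs_of_nonneg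
          positivity
        simp only [Real.norm_eq_abs]
        rw [habs, hD1, mul_pow]
        gcongr
    refine h1.trans ?_
    rw [hC]
    have e1 : (i.factorial : ℝ) ≤ (p.factorial : ℝ) := by exact_mod_cast Nat.factorial_le hi
    have e2 : α ^ i ≤ α ^ p := pow_le_pow_right₀ hα hi
    have e3 : D1 ^ i ≤ D1 ^ p := pow_le_pow_right₀ hD1_1 hi
    have n1 : (0:ℝ) ≤ α ^ i := pow_nonneg hα0.le i
    have n2 : (0:ℝ) ≤ D1 ^ i := pow_nonneg (le_trans zero_le_one hD1_1) i
    have n3 : (0:ℝ) ≤ (p.factorial : ℝ) := by positivity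
    have n4 : (0:ℝ) ≤ α ^ p := pow_nonneg hα0.le p
    exact mul_le_mul (mul_le_mul e1 e2 n1 n3) e3 n2 (mul_nonneg n3 n4)
  -- outer composition
  set D : ℝ := p / x with hD
  have key : ‖iteratedFDerivWithin ℝ p (g ∘ Real.log) (Set.Ioi 0) x‖ ≤ p.factorial * C * D ^ p := by
    apply norm_iteratedFDerivWithin_comp_le (t := Set.univ) (N := ((⊤ : ℕ∞) : WithTop ℕ∞))
      hgc.contDiffOn (Real.contDiffOn_log.mono fun y hy => ne_of_gt hy) (by exact_mod_cast le_top)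
      uniqueDiffOn_univ isOpen_Ioi.uniqueDiffOn (Set.mapsTo_univ _ _) (Set.mem_Ioi.2 hx0)
    · intro i hi
      rw [iteratedFDerivWithin_univ]
      exact hg_bound i hi
    · intro i hi1 hip
      show ‖iteratedFDerivWithin ℝ i Real.log (Set.Ioi 0) x‖ ≤ D ^ i
      rw [iteratedFDerivWithin_of_isOpen i isOpen_Ioi (Set.mem_Ioi.2 hx0),
        norm_iteratedFDeriv_eq_norm_iteratedDeriv]
      obtain ⟨m, rfl⟩ := Nat.exists_eq_add_of_le hi1
      rw [add_comm 1 m, iterLog m x hx0]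
      have habs : |(-1 : ℝ) ^ m * m.factorial / x ^ (m + 1)|
          = m.factorial / x ^ (m + 1) := by
        rw [abs_div, abs_mul, abs_pow, abs_neg, abs_one, one_pow, one_mul,
          Nat.abs_cast, abs_of_pos (pow_pos hx0 _)]
      rw [Real.norm_eq_abs, habs, hD, div_pow]
      gcongr
      have : m.factorial ≤ p ^ (m + 1) := by
        calc m.factorial ≤ m ^ m := Nat.factorial_le_pow m
          _ ≤ p ^ m := Nat.pow_le_pow_left (by omega) m
          _ ≤ p ^ (m + 1) := Nat.pow_le_pow_right (by omega) (by omega)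
      exact_mod_cast this
  -- final assembly
  have hpf : (0:ℝ) < (p.factorial : ℝ) := by positivity
  have hfun : (fun y => f (Real.log y ^ ℓ)) = g ∘ Real.log := rfl
  have h2 : |iteratedDeriv p (g ∘ Real.log) x| ≤ p.factorial * C * D ^ p := by
    rw [← Real.norm_eq_abs, ← norm_iteratedFDeriv_eq_norm_iteratedDeriv,
      ← iteratedFDerivWithin_of_isOpen p isOpen_Ioi (Set.mem_Ioi.2 hx0)]
    exact key
  have hnat : p.factorial * ℓ ^ p * p ^ p ≤ 2 ^ (ℓ * p) * p ^ ((ℓ + 1) * p) := by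
    calc p.factorial * ℓ ^ p * p ^ p
        ≤ p ^ p * (2 ^ ℓ) ^ p * p ^ p :=
          Nat.mul_le_mul (Nat.mul_le_mul (Nat.factorial_le_pow p)
            (Nat.pow_le_pow_left (Nat.lt_two_pow_self (n := ℓ)).le p)) le_rfl
      _ = 2 ^ (ℓ * p) * p ^ (2 * p) := by rw [← pow_mul]; ring
      _ ≤ 2 ^ (ℓ * p) * p ^ ((ℓ + 1) * p) :=
          Nat.mul_le_mul le_rfl (Nat.pow_le_pow_right hp
            (Nat.mul_le_mul (by omega) (le_refl p)))
  have hnum : (p.factorial : ℝ) * α ^ p * ((ℓ : ℝ) * t ^ (ℓ - 1)) ^ p * (p:ℝ) ^ p ≤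
      (α * 2 ^ ℓ) ^ p * (p:ℝ) ^ ((ℓ + 1) * p) * t ^ (p * (ℓ - 1)) := by
    have hcast : ((p.factorial * ℓ ^ p * p ^ p : ℕ) : ℝ) ≤
        ((2 ^ (ℓ * p) * p ^ ((ℓ + 1) * p) : ℕ) : ℝ) := by exact_mod_cast hnat
    push_cast at hcast
    have hR : (0:ℝ) ≤ α ^ p * t ^ ((ℓ - 1) * p) :=
      mul_nonneg (pow_nonneg hα0.le _) (pow_nonneg ht0.le _)
    have h3 := mul_le_mul_of_nonneg_right hcast hR
    calc (p.factorial : ℝ) * α ^ p * ((ℓ : ℝ) * t ^ (ℓ - 1)) ^ p * (p:ℝ) ^ p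
        = (p.factorial : ℝ) * (ℓ:ℝ) ^ p * (p:ℝ) ^ p * (α ^ p * t ^ ((ℓ - 1) * p)) := by
          rw [mul_pow, ← pow_mul]; ring
      _ ≤ (2:ℝ) ^ (ℓ * p) * (p:ℝ) ^ ((ℓ + 1) * p) * (α ^ p * t ^ ((ℓ - 1) * p)) := h3
      _ = (α * 2 ^ ℓ) ^ p * (p:ℝ) ^ ((ℓ + 1) * p) * t ^ (p * (ℓ - 1)) := by
          rw [mul_pow, ← pow_mul, mul_comm p (ℓ - 1)]; ring
  rw [hfun]
  calc |iteratedDeriv p (g ∘ Real.log) x| / (p.factorial : ℝ)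
      ≤ (p.factorial * C * D ^ p) / (p.factorial : ℝ) := by
        gcongr
    _ = C * D ^ p := by field_simp
    _ = ((p.factorial : ℝ) * α ^ p * ((ℓ : ℝ) * t ^ (ℓ - 1)) ^ p * (p:ℝ) ^ p) / x ^ p := by
        rw [hC, hD, hD1, div_pow]; ring
    _ ≤ (α * 2 ^ ℓ) ^ p * (p:ℝ) ^ ((ℓ + 1) * p) * t ^ (p * (ℓ - 1)) / x ^ p := by
        gcongr
    _ = (α * 2 ^ ℓ) ^ p * (p : ℝ) ^ ((ℓ + 1) * p) * Real.log x ^ (p * (ℓ - 1)) / x ^ p := by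
        rw [ht]
end

section
/- Let a > 1 and let h : [a,∞) → ℝ be a smooth function with h(x) ≥ 1 for all x ≥ a, satisfying |h^{(p)}(x)/p!| ≤ (A p^B (log x)^C/x)^p for all p ≥ 1 and x ≥ a. Then the function 1/h satisfies a bound of the same shape: there exist constants A', B', C' ≥ 0 such that |(1/h)^{(p)}(x)/p!| ≤ (A' p^{B'} (log x)^{C'}/x)^p for all p ≥ 1 and x ≥ a. -/
/-- If `h : [a,∞) → ℝ` (`a > 1`) is smooth, `h ≥ 1`, and satisfies the slow bound
`|h^{(p)}(x)/p!| ≤ (A p^B (log x)^C / x)^p` for `p ≥ 1` and `x ≥ a`, then `1/h`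
satisfies a bound of the same shape for some constants `A', B', C' ≥ 0`. -/
theorem inv_of_slow_is_slow (a A B C : ℝ) (ha : 1 < a)
    (hA : 0 ≤ A) (hB : 0 ≤ B) (hC : 0 ≤ C)
    (h : ℝ → ℝ) (hsm : ContDiffOn ℝ (⊤ : ℕ∞) h (Set.Ici a)) (h1 : ∀ x ≥ a, 1 ≤ h x)
    (hb : ∀ (p : ℕ), 1 ≤ p → ∀ x ≥ a,
      |iteratedDerivWithin p h (Set.Ici a) x| / (p.factorial : ℝ) ≤
        (A * (p : ℝ) ^ B * Real.log x ^ C / x) ^ p) :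
    ∃ A' B' C' : ℝ, 0 ≤ A' ∧ 0 ≤ B' ∧ 0 ≤ C' ∧
      ∀ (p : ℕ), 1 ≤ p → ∀ x ≥ a,
        |iteratedDerivWithin p (fun y => 1 / h y) (Set.Ici a) x| / (p.factorial : ℝ) ≤
          (A' * (p : ℝ) ^ B' * Real.log x ^ C' / x) ^ p := by
  refine ⟨A, B + 2, C, hA, by positivity, hC, ?_⟩
  intro p hp x hx
  have hx1 : (1:ℝ) < x := lt_of_lt_of_le ha hx
  have hx0 : (0:ℝ) < x := by linarith
  have hL : 0 ≤ Real.log x := Real.log_nonneg hx1.le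
  set L := Real.log x with hLdef
  have hp0 : (0:ℝ) < (p:ℝ) := by exact_mod_cast hp
  set D : ℝ := A * (p:ℝ) ^ (B+1) * L ^ C / x with hDdef
  have hD0 : 0 ≤ D := by positivity
  set t : Set ℝ := Set.Ioi (1/2 : ℝ) with htdef
  have hto : IsOpen t := isOpen_Ioi
  have hmaps : Set.MapsTo h (Set.Ici a) t := by
    intro y hy
    have := h1 y hy
    simp only [htdef, Set.mem_Ioi]
    linarith
  have hginv : ContDiffOn ℝ (⊤ : ℕ∞) (Inv.inv : ℝ → ℝ) t := by
    apply ContDiffOn.mono (contDiffOn_inv ℝ)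
    intro y hy
    simp only [htdef, Set.mem_Ioi] at hy
    simp only [Set.mem_compl_iff, Set.mem_singleton_iff]
    intro hy0
    rw [hy0] at hy
    norm_num at hy
  -- bound on the derivatives of inv at h x
  have hCbound : ∀ i, i ≤ p →
      ‖iteratedFDerivWithin ℝ i (Inv.inv : ℝ → ℝ) t (h x)‖ ≤ (p.factorial : ℝ) := by
    intro i hip
    have hhx : h x ∈ t := hmaps (by exact hx)
    rw [iteratedFDerivWithin_of_isOpen i hto hhx,
      norm_iteratedFDeriv_eq_norm_iteratedDeriv, iteratedDeriv_eq_iterate,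
      iter_deriv_inv]
    have h1x : (1:ℝ) ≤ h x := h1 x hx
    have habs : ‖(∏ j ∈ Finset.range i, (-1 - (j:ℝ))) * h x ^ (-1 - (i:ℤ))‖
        = (∏ j ∈ Finset.range i, ((j:ℝ) + 1)) * |h x ^ (-1 - (i:ℤ))| := by
      rw [norm_mul, Real.norm_eq_abs, Real.norm_eq_abs, Finset.abs_prod]
      congr 1
      apply Finset.prod_congr rfl
      intro j _
      have hj : (0:ℝ) ≤ (j:ℝ) := Nat.cast_nonneg j
      rw [abs_of_nonpos (by linarith)]
      ring
    rw [show ‖(-1) ^ i * (i.factorial:ℝ) * h x ^ (-1 - (i:ℤ))‖ = (∏ j ∈ Finset.range i, ((j:ℝ) + 1)) * |h x ^ (-1 - (i:ℤ))| by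
      rw [norm_mul, norm_mul, norm_pow, norm_neg, norm_one, one_pow, one_mul, Real.norm_eq_abs, Real.norm_eq_abs, Nat.abs_cast]
      congr 1
      rw [← Finset.prod_range_add_one_eq_factorial i]
      push_cast
      rfl]
    have hprod : (∏ j ∈ Finset.range i, ((j:ℝ) + 1)) = (i.factorial : ℝ) := by
      rw [← Finset.prod_range_add_one_eq_factorial i]
      push_cast
      rfl
    rw [hprod]
    have hz : |h x ^ (-1 - (i:ℤ))| ≤ 1 := by
      rw [abs_of_nonneg (zpow_nonneg (by linarith) _)]
      exact zpow_le_one_of_nonpos₀ h1x (by omega)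
    calc (i.factorial : ℝ) * |h x ^ (-1 - (i:ℤ))| ≤ (i.factorial : ℝ) * 1 := by
          apply mul_le_mul_of_nonneg_left hz (by positivity)
      _ = (i.factorial : ℝ) := mul_one _
      _ ≤ (p.factorial : ℝ) := by exact_mod_cast Nat.factorial_le hip
  -- bound on the derivatives of h
  have hDbound : ∀ i, 1 ≤ i → i ≤ p →
      ‖iteratedFDerivWithin ℝ i h (Set.Ici a) x‖ ≤ D ^ i := by
    intro i hi1 hip
    rw [norm_iteratedFDerivWithin_eq_norm_iteratedDerivWithin, Real.norm_eq_abs]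
    have hi0 : (0:ℝ) < (i:ℝ) := by exact_mod_cast hi1
    have hbi := hb i hi1 x hx
    have hfac : (0:ℝ) < (i.factorial : ℝ) := by exact_mod_cast i.factorial_pos
    rw [div_le_iff₀ hfac] at hbi
    have hm0 : 0 ≤ A * (i:ℝ) ^ B * L ^ C / x := by positivity
    have hipow : ((i.factorial : ℝ)) ≤ (i:ℝ) ^ i := by
      exact_mod_cast Nat.factorial_le_pow i
    have step1 : |iteratedDerivWithin i h (Set.Ici a) x| ≤
        (A * (i:ℝ) ^ B * L ^ C / x) ^ i * (i:ℝ) ^ i := by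
      refine hbi.trans ?_
      gcongr
    have hri : (i:ℝ) ^ (B + 1) = (i:ℝ) ^ B * (i:ℝ) := by
      rw [Real.rpow_add_one (ne_of_gt hi0)]
    have step2 : (A * (i:ℝ) ^ B * L ^ C / x) ^ i * (i:ℝ) ^ i
        = (A * (i:ℝ) ^ (B + 1) * L ^ C / x) ^ i := by
      rw [← mul_pow, hri]
      congr 1
      field_simp
    have step3 : (A * (i:ℝ) ^ (B + 1) * L ^ C / x) ^ i ≤ D ^ i := by
      apply pow_le_pow_left₀ (by positivity)
      rw [hDdef]
      gcongr
    exact step1.trans (step2.le.trans step3)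
  -- apply the Faà di Bruno-type bound
  have key := norm_iteratedFDerivWithin_comp_le (n := p) hginv (hsm.of_le (by simp))
    (by exact_mod_cast (le_top : (p:ℕ∞) ≤ ⊤)) hto.uniqueDiffOn (uniqueDiffOn_Ici a) hmaps hx hCbound hDbound
  have hfun : (fun y => 1 / h y) = (Inv.inv ∘ h) := by
    funext y; simp [one_div]
  rw [hfun]
  have habs : |iteratedDerivWithin p (Inv.inv ∘ h) (Set.Ici a) x|
      = ‖iteratedFDerivWithin ℝ p (Inv.inv ∘ h) (Set.Ici a) x‖ := by
    rw [norm_iteratedFDerivWithin_eq_norm_iteratedDerivWithin, Real.norm_eq_abs]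
  rw [habs]
  have hfacp : (0:ℝ) < (p.factorial : ℝ) := by exact_mod_cast p.factorial_pos
  rw [div_le_iff₀ hfacp]
  have hppow : ((p.factorial : ℝ)) ≤ (p:ℝ) ^ p := by
    exact_mod_cast Nat.factorial_le_pow p
  have hrp : (p:ℝ) ^ (B + 2) = (p:ℝ) ^ (B + 1) * (p:ℝ) := by
    rw [show B + 2 = (B + 1) + 1 by ring, Real.rpow_add_one (ne_of_gt hp0)]
  have hpd : (p:ℝ) ^ p * D ^ p = (A * (p:ℝ) ^ (B + 2) * L ^ C / x) ^ p := by
    rw [← mul_pow, hDdef, hrp]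
    congr 1
    field_simp
  calc ‖iteratedFDerivWithin ℝ p (Inv.inv ∘ h) (Set.Ici a) x‖
      ≤ (p.factorial : ℝ) * (p.factorial : ℝ) * D ^ p := key
    _ ≤ (p.factorial : ℝ) * ((p:ℝ) ^ p * D ^ p) := by
        rw [mul_assoc]
        gcongr
    _ = ((p:ℝ) ^ p * D ^ p) * (p.factorial : ℝ) := by ring
    _ = (A * (p:ℝ) ^ (B + 2) * L ^ C / x) ^ p * (p.factorial : ℝ) := by rw [hpd]
end

section
/- Fix reals A, B ≥ 0, C ≥ 0 and an integer d ≥ 1; set μ = (d+1)(d+2)/2 and ρ = μ(μ-1)/2, and let N ≥ e^C. Let γ = (f,g) : [a,∞) → ℝ² be smooth with |f|, |g| ≤ 1 and with |f^{(p)}(x)/p!|, |g^{(p)}(x)/p!| ≤ (A p^B (log x)^C/x)^p for all p ≥ 0 and x ≥ a. Then for any L > 0 and any points x_1,…,x_μ ∈ [N, N+L] ∩ [a,∞), the determinant Δ = det( f(x_j)^{α₁} g(x_j)^{α₂} ), where (α₁,α₂) ranges over all pairs of nonnegative integers with α₁+α₂ ≤ d and j ranges over 1,…,μ, satisfies |Δ|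 ≤ μ! A^ρ μ^{d(μ-1)} μ^{Bρ} L^ρ (log N)^{Cρ} / N^ρ. -/
open Set Finset Polynomial

namespace DetSlowAux

lemma fact_le (n : ℕ) : n.factorial ≤ n ^ (n - 1) := by
  induction n with
  | zero => simp
  | succ k ih =>
    rcases Nat.eq_zero_or_pos k with hk | hk
    · subst hk; simp
    · calc (k+1).factorial = (k+1) * k.factorial := rfl
        _ ≤ (k+1) * k ^ (k-1) := Nat.mul_le_mul_left _ ih
        _ ≤ (k+1) * (k+1) ^ (k-1) := by gcongr <;> omega
        _ = (k+1) ^ (k-1+1) := by ring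
        _ = (k+1) ^ (k+1-1) := by congr 1; omega

lemma logpow_anti {C N y : ℝ} (hC : 0 ≤ C) (hN : Real.exp C ≤ N) (hy : N ≤ y) :
    Real.log y ^ C / y ≤ Real.log N ^ C / N := by
  have hN0 : (0:ℝ) < N := lt_of_lt_of_le (Real.exp_pos C) hN
  have hy0 : (0:ℝ) < y := lt_of_lt_of_le hN0 hy
  have hlogN : C ≤ Real.log N := (Real.le_log_iff_exp_le hN0).mpr hN
  have hlogy : Real.log N ≤ Real.log y := Real.log_le_log hN0 hy
  rcases eq_or_lt_of_le hC with hC0 | hCpos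
  · subst hC0
    simp only [Real.rpow_zero]
    exact one_div_le_one_div_of_le hN0 hy
  · have hlN0 : 0 < Real.log N := lt_of_lt_of_le hCpos hlogN
    have hly0 : 0 < Real.log y := lt_of_lt_of_le hlN0 hlogy
    rw [div_le_div_iff₀ hy0 hN0]
    have key : Real.log y ^ C ≤ Real.log N ^ C * (y / N) := by
      have h1 : Real.log y ^ C = Real.log N ^ C * (Real.log y / Real.log N) ^ C := by
        rw [← Real.mul_rpow hlN0.le (by positivity)]
        congr 1
        field_simp
      rw [h1]
      have hr1 : (0:ℝ) < Real.log y / Real.log N := by positivity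
      have h2 : (Real.log y / Real.log N) ^ C = Real.exp (C * Real.log (Real.log y / Real.log N)) :=
        by rw [Real.rpow_def_of_pos hr1, mul_comm]
      have h3 : C * Real.log (Real.log y / Real.log N) ≤ Real.log y - Real.log N := by
        have hlr : Real.log (Real.log y / Real.log N) ≤ Real.log y / Real.log N - 1 :=
          Real.log_le_sub_one_of_pos hr1
        have h4 : C * Real.log (Real.log y / Real.log N) ≤ C * (Real.log y / Real.log N - 1) :=
          mul_le_mul_of_nonneg_left hlr hC
        have h5 : C * (Real.log y / Real.log N - 1) ≤ Real.log N * (Real.log y / Real.log N - 1) := by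
          apply mul_le_mul_of_nonneg_right hlogN
          rw [sub_nonneg, le_div_iff₀ hlN0]
          linarith
        have h6 : Real.log N * (Real.log y / Real.log N - 1) = Real.log y - Real.log N := by
          field_simp
        linarith
      have h7 : Real.exp (C * Real.log (Real.log y / Real.log N)) ≤ Real.exp (Real.log y - Real.log N) :=
        Real.exp_le_exp.mpr h3
      have h8 : Real.exp (Real.log y - Real.log N) = y / N := by
        rw [Real.exp_sub, Real.exp_log hy0, Real.exp_log hN0]
      have key : Real.log N ^ C * (Real.log y / Real.log N) ^ C
          ≤ Real.log N ^ C * (y / N) := by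
            rw [h2]
            apply mul_le_mul_of_nonneg_left _ (Real.rpow_nonneg hlN0.le C)
            rw [← h8]; exact h7
      exact key
    calc Real.log y ^ C * N ≤ (Real.log N ^ C * (y / N)) * N :=
          mul_le_mul_of_nonneg_right key hN0.le
      _ = Real.log N ^ C * y := by field_simp

lemma iter_rolle (a : ℝ) :
    ∀ (n : ℕ) (h : ℝ → ℝ), ContDiffOn ℝ (⊤ : ℕ∞) h (Set.Ici a) →
    ∀ y : Fin (n + 1) → ℝ, StrictMono y → (∀ i, a ≤ y i) → (∀ i, h (y i) = 0) →
    ∃ ξ, ξ ∈ Set.Icc (y 0) (y (Fin.last n)) ∧ iteratedDerivWithin n h (Set.Ici a) ξ = 0 := by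
  intro n
  induction n with
  | zero =>
    intro h _ y _ _ hz
    exact ⟨y 0, ⟨le_refl _, le_refl _⟩, by simpa [iteratedDerivWithin_zero] using hz 0⟩
  | succ n IH =>
    intro h hh y hy hya hz
    have key : ∀ i : Fin (n+1), ∃ z, z ∈ Set.Ioo (y i.castSucc) (y i.succ) ∧ deriv h z = 0 := by
      intro i
      have hlt : y i.castSucc < y i.succ := hy (Fin.castSucc_lt_succ (i := i))
      have hcont : ContinuousOn h (Set.Icc (y i.castSucc) (y i.succ)) :=
        hh.continuousOn.mono (fun t ht => le_trans (hya _) ht.1)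
      obtain ⟨c, hc, hc0⟩ := exists_deriv_eq_zero hlt hcont (by rw [hz, hz])
      exact ⟨c, hc, hc0⟩
    choose z hz1 hz2 using key
    have hza : ∀ i, a < z i := fun i => lt_of_le_of_lt (hya _) (hz1 i).1
    have hzm : StrictMono z := by
      intro i j hij
      have h1 : z i < y i.succ := (hz1 i).2
      have h2 : y j.castSucc < z j := (hz1 j).1
      have h3 : y i.succ ≤ y j.castSucc := by
        apply hy.monotone
        rw [Fin.le_def]
        simp only [Fin.val_succ, Fin.coe_castSucc]
        exact Fin.lt_def.mp hij
      linarith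
    set h' := derivWithin h (Set.Ici a) with hh'def
    have hz0 : ∀ i, h' (z i) = 0 := fun i => by
      rw [hh'def, derivWithin_of_mem_nhds (Ici_mem_nhds (hza i))]
      exact hz2 i
    have hh'2 : ContDiffOn ℝ (⊤ : ℕ∞) h' (Set.Ici a) := hh.derivWithin (uniqueDiffOn_Ici a) (by simp)
    obtain ⟨ξ, hξ1, hξ2⟩ := IH h' hh'2 z hzm (fun i => (hza i).le) hz0
    have hmem : ξ ∈ Set.Ici a := le_of_lt (lt_of_lt_of_le (hza 0) hξ1.1)
    refine ⟨ξ, ⟨?_, ?_⟩, ?_⟩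
    · have : y ((0 : Fin (n+1)).castSucc) < z 0 := (hz1 0).1
      simp only [Fin.castSucc_zero] at this
      exact le_trans this.le hξ1.1
    · have h1 : z (Fin.last n) < y ((Fin.last n).succ) := (hz1 (Fin.last n)).2
      rw [Fin.succ_last] at h1
      exact le_trans hξ1.2 h1.le
    · rw [iteratedDerivWithin_succ']
      exact hξ2

lemma poly_contDiff (p : Polynomial ℝ) : ContDiff ℝ (⊤ : ℕ∞) fun y => p.eval y := by
  induction p using Polynomial.induction_on' with
  | add p q hp hq => simpa [Polynomial.eval_add] using hp.add hq
  | monomial n c =>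
    simpa [Polynomial.eval_monomial] using (contDiff_const (c := c)).mul (contDiff_id.pow n)

lemma poly_iDW (a : ℝ) : ∀ (j : ℕ) (p : Polynomial ℝ), p.natDegree ≤ j → ∀ ξ ∈ Set.Ici a,
    iteratedDerivWithin j (fun y => p.eval y) (Set.Ici a) ξ = (j.factorial : ℝ) * p.coeff j := by
  intro j
  induction j with
  | zero =>
    intro p hp ξ _
    rw [iteratedDerivWithin_zero]
    conv_lhs => rw [Polynomial.eq_C_of_natDegree_le_zero hp]
    simp
  | succ j IH =>
    intro p hp ξ hξ
    rw [iteratedDerivWithin_succ']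
    have hEq : Set.EqOn (derivWithin (fun y => p.eval y) (Set.Ici a))
        (fun y => p.derivative.eval y) (Set.Ici a) := by
      intro u hu
      exact p.derivWithin ((uniqueDiffOn_Ici a) u hu)
    rw [iteratedDerivWithin_congr hEq hξ]
    rw [IH p.derivative (le_trans (Polynomial.natDegree_derivative_le p) (by omega)) ξ hξ]
    rw [Polynomial.coeff_derivative]
    push_cast [Nat.factorial_succ]
    ring

lemma natDeg_prod_bd (v : ℝ) (t : Finset ℝ) :
    (∏ w ∈ t, Lagrange.basisDivisor v w).natDegree ≤ t.card := by
  refine le_trans (Polynomial.natDegree_prod_le t _) ?_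
  have h1 : ∀ w ∈ t, (Lagrange.basisDivisor v w).natDegree ≤ 1 := by
    intro w _
    rw [Lagrange.basisDivisor]
    refine le_trans (Polynomial.natDegree_C_mul_le _ _) ?_
    simp [Polynomial.natDegree_X_sub_C]
  calc ∑ w ∈ t, (Lagrange.basisDivisor v w).natDegree ≤ ∑ _w ∈ t, 1 := Finset.sum_le_sum h1
    _ = t.card := by simp

lemma coeff_prod_bd (v : ℝ) (t : Finset ℝ) :
    (∏ w ∈ t, Lagrange.basisDivisor v w).coeff t.card = ∏ w ∈ t, (v - w)⁻¹ := by
  induction t using Finset.induction_on with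
  | empty => simp
  | @insert w t hw ih =>
    rw [Finset.prod_insert hw, Finset.prod_insert hw, Finset.card_insert_of_notMem hw]
    have hdeg : (∏ u ∈ t, Lagrange.basisDivisor v u).natDegree ≤ t.card := natDeg_prod_bd v t
    rw [show Lagrange.basisDivisor v w = Polynomial.C (v - w)⁻¹ * (Polynomial.X - Polynomial.C w)
        from rfl]
    rw [mul_assoc, Polynomial.coeff_C_mul, sub_mul, Polynomial.coeff_sub, Polynomial.coeff_X_mul,
      Polynomial.coeff_C_mul,
      Polynomial.coeff_eq_zero_of_natDegree_lt (lt_of_le_of_lt hdeg (Nat.lt_succ_self _)), ih]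
    ring

lemma coeff_interp (T : Finset ℝ) (r : ℝ → ℝ) :
    (Lagrange.interpolate T id r).coeff (T.card - 1) =
      ∑ v ∈ T, r v * (∏ w ∈ T.erase v, (v - w))⁻¹ := by
  rw [Lagrange.interpolate_apply, Polynomial.finset_sum_coeff]
  refine Finset.sum_congr rfl fun v hv => ?_
  rw [Polynomial.coeff_C_mul]
  congr 1
  have hcard : (T.erase v).card = T.card - 1 := Finset.card_erase_of_mem hv
  have hbasis : Lagrange.basis T id v = ∏ w ∈ T.erase v, Lagrange.basisDivisor v w := rfl
  rw [hbasis, ← hcard, coeff_prod_bd]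
  exact Finset.prod_inv_distrib _

lemma divdiff (a c d' : ℝ) (hac : a ≤ c) (φ : ℝ → ℝ) (hφ : ContDiffOn ℝ (⊤ : ℕ∞) φ (Set.Ici a))
    (T : Finset ℝ) (hT0 : T.Nonempty) (hT : ↑T ⊆ Set.Icc c d') :
    ∃ ξ ∈ Set.Icc c d',
      (∑ v ∈ T, φ v * (∏ w ∈ T.erase v, (v - w))⁻¹) * ((T.card - 1).factorial : ℝ) =
        iteratedDerivWithin (T.card - 1) φ (Set.Ici a) ξ := by
  obtain ⟨n, hn⟩ : ∃ n, T.card = n + 1 := by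
    have := Finset.card_pos.mpr hT0
    exact ⟨T.card - 1, by omega⟩
  set P := Lagrange.interpolate T id φ with hPdef
  have hPdeg : P.natDegree ≤ n := by
    by_cases h0 : P = 0
    · simp [h0]
    · have hdeg : P.degree < (T.card : WithBot ℕ) :=
        Lagrange.degree_interpolate_lt (r := φ) (Set.injOn_id _)
      rw [Polynomial.degree_eq_natDegree h0] at hdeg
      have : P.natDegree < T.card := by exact_mod_cast hdeg
      omega
  have hsmooth : ContDiffOn ℝ (⊤ : ℕ∞) (φ - fun y => P.eval y) (Set.Ici a) :=
    hφ.sub (poly_contDiff P).contDiffOn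
  set y : Fin (n+1) → ℝ := fun i => ((T.orderIsoOfFin hn i : ℝ)) with hydef
  have hymem : ∀ i, y i ∈ T := fun i => (T.orderIsoOfFin hn i).2
  have hymono : StrictMono y := fun i j hij => by
    have := (T.orderIsoOfFin hn).strictMono hij
    exact_mod_cast this
  have hya : ∀ i, a ≤ y i := fun i => le_trans hac (hT (hymem i)).1
  have hyz : ∀ i, (φ - fun u => P.eval u) (y i) = 0 := fun i => by
    have hvz : P.eval (y i) = φ (y i) :=
      Lagrange.eval_interpolate_at_node (v := id) (r := φ) (Set.injOn_id _) (hymem i)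
    simp [hvz]
  obtain ⟨ξ, hξmem, hξ0⟩ := iter_rolle a n _ hsmooth y hymono hya hyz
  have hξa : ξ ∈ Set.Ici a := le_trans (hya 0) hξmem.1
  have hsub := iteratedDerivWithin_sub (n := n) hξa (uniqueDiffOn_Ici a)
    ((hφ.of_le (by exact_mod_cast le_top)) ξ hξa) (((poly_contDiff P).contDiffOn.of_le (by exact_mod_cast le_top)) ξ hξa)
  rw [hsub] at hξ0
  have hpoly := poly_iDW a n P hPdeg ξ hξa
  have key : iteratedDerivWithin n φ (Set.Ici a) ξ = (n.factorial : ℝ) * P.coeff n := by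
    rw [← hpoly]
    linarith [hξ0]
  have hc := coeff_interp T φ
  refine ⟨ξ, ⟨le_trans (hT (hymem 0)).1 hξmem.1,
    le_trans hξmem.2 (hT (hymem (Fin.last n))).2⟩, ?_⟩
  have hcard1 : T.card - 1 = n := by omega
  rw [hcard1] at hc ⊢
  rw [← hc, ← hPdef, key]
  ring

lemma mul_bound (a N t : ℝ) (ht : 0 ≤ t) (K m : ℕ)
    (h₁ h₂ : ℝ → ℝ) (hs₁ : ContDiffOn ℝ (⊤ : ℕ∞) h₁ (Set.Ici a)) (hs₂ : ContDiffOn ℝ (⊤ : ℕ∞) h₂ (Set.Ici a))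
    (hb₁ : ∀ q ≤ K, ∀ ξ, a ≤ ξ → N ≤ ξ →
      |iteratedDerivWithin q h₁ (Set.Ici a) ξ| ≤ (q.factorial : ℝ) * ((q : ℝ) + 1) ^ m * t ^ q)
    (hb₂ : ∀ q ≤ K, ∀ ξ, a ≤ ξ → N ≤ ξ →
      |iteratedDerivWithin q h₂ (Set.Ici a) ξ| ≤ (q.factorial : ℝ) * t ^ q) :
    ∀ p ≤ K, ∀ ξ, a ≤ ξ → N ≤ ξ →
      |iteratedDerivWithin p (fun y => h₁ y * h₂ y) (Set.Ici a) ξ| ≤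
        (p.factorial : ℝ) * ((p : ℝ) + 1) ^ (m + 1) * t ^ p := by
  intro p hp ξ hξa hξN
  have hξa' : ξ ∈ Set.Ici a := hξa
  have hmain := norm_iteratedFDerivWithin_mul_le (𝕜 := ℝ) hs₁ hs₂ (uniqueDiffOn_Ici a) hξa'
    (n := p) (by exact_mod_cast (le_top : (p : ℕ∞) ≤ ⊤))
  rw [norm_iteratedFDerivWithin_eq_norm_iteratedDerivWithin, Real.norm_eq_abs] at hmain
  refine le_trans hmain ?_
  have hterm : ∀ i ∈ Finset.range (p + 1),
      (p.choose i : ℝ) * ‖iteratedFDerivWithin ℝ i h₁ (Set.Ici a) ξ‖ *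
        ‖iteratedFDerivWithin ℝ (p - i) h₂ (Set.Ici a) ξ‖ ≤
      (p.factorial : ℝ) * ((p : ℝ) + 1) ^ m * t ^ p := by
    intro i hi
    have hi' : i ≤ p := by
      have := Finset.mem_range.mp hi; omega
    rw [norm_iteratedFDerivWithin_eq_norm_iteratedDerivWithin,
      norm_iteratedFDerivWithin_eq_norm_iteratedDerivWithin, Real.norm_eq_abs, Real.norm_eq_abs]
    have e1 := hb₁ i (le_trans hi' hp) ξ hξa hξN
    have e2 := hb₂ (p - i) (le_trans (Nat.sub_le p i) hp) ξ hξa hξN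
    calc (p.choose i : ℝ) * |iteratedDerivWithin i h₁ (Set.Ici a) ξ| *
          |iteratedDerivWithin (p - i) h₂ (Set.Ici a) ξ|
        ≤ (p.choose i : ℝ) * ((i.factorial : ℝ) * ((i : ℝ) + 1) ^ m * t ^ i) *
          (((p - i).factorial : ℝ) * t ^ (p - i)) := by
          apply mul_le_mul _ e2 (abs_nonneg _) (by positivity)
          exact mul_le_mul_of_nonneg_left e1 (by positivity)
      _ = ((p.choose i : ℝ) * (i.factorial : ℝ) * ((p - i).factorial : ℝ)) * ((i : ℝ) + 1) ^ m *
          (t ^ i * t ^ (p - i)) := by ring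
      _ = (p.factorial : ℝ) * ((i : ℝ) + 1) ^ m * t ^ p := by
          rw [← pow_add]
          congr 2
          · exact_mod_cast congrArg (fun z : ℕ => (z : ℝ))
              (Nat.choose_mul_factorial_mul_factorial hi')
          · omega
      _ ≤ (p.factorial : ℝ) * ((p : ℝ) + 1) ^ m * t ^ p := by
          have h9 : ((i : ℝ) + 1) ^ m ≤ ((p : ℝ) + 1) ^ m :=
            pow_le_pow_left₀ (by positivity) (by exact_mod_cast Nat.succ_le_succ hi') m
          have h10 := mul_le_mul_of_nonneg_right
            (mul_le_mul_of_nonneg_left h9 (by positivity : (0:ℝ) ≤ (p.factorial : ℝ)))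
            (by positivity : (0:ℝ) ≤ t ^ p)
          linarith
  calc ∑ i ∈ Finset.range (p + 1), (p.choose i : ℝ) *
        ‖iteratedFDerivWithin ℝ i h₁ (Set.Ici a) ξ‖ * ‖iteratedFDerivWithin ℝ (p - i) h₂ (Set.Ici a) ξ‖
      ≤ ∑ _i ∈ Finset.range (p + 1), (p.factorial : ℝ) * ((p : ℝ) + 1) ^ m * t ^ p :=
        Finset.sum_le_sum hterm
    _ = ((p : ℝ) + 1) * ((p.factorial : ℝ) * ((p : ℝ) + 1) ^ m * t ^ p) := by
        rw [Finset.sum_const, Finset.card_range, nsmul_eq_mul]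
        push_cast; ring
    _ = (p.factorial : ℝ) * ((p : ℝ) + 1) ^ (m + 1) * t ^ p := by rw [pow_succ]; ring

lemma pow_bound (a N t : ℝ) (ht : 0 ≤ t) (K : ℕ) (u v : ℝ → ℝ)
    (hu : ContDiffOn ℝ (⊤ : ℕ∞) u (Set.Ici a)) (hv : ContDiffOn ℝ (⊤ : ℕ∞) v (Set.Ici a))
    (hub : ∀ q ≤ K, ∀ ξ, a ≤ ξ → N ≤ ξ →
      |iteratedDerivWithin q u (Set.Ici a) ξ| ≤ (q.factorial : ℝ) * t ^ q)
    (hvb : ∀ q ≤ K, ∀ ξ, a ≤ ξ → N ≤ ξ →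
      |iteratedDerivWithin q v (Set.Ici a) ξ| ≤ (q.factorial : ℝ) * t ^ q) :
    ∀ (m α β : ℕ), α + β = m + 1 → ∀ p ≤ K, ∀ ξ, a ≤ ξ → N ≤ ξ →
      |iteratedDerivWithin p (fun y => u y ^ α * v y ^ β) (Set.Ici a) ξ| ≤
        (p.factorial : ℝ) * ((p : ℝ) + 1) ^ m * t ^ p := by
  intro m
  induction m with
  | zero =>
    intro α β hαβ p hp ξ hξa hξN
    have hcase : (α = 1 ∧ β = 0) ∨ (α = 0 ∧ β = 1) := by omega
    rcases hcase with ⟨h1, h2⟩ | ⟨h1, h2⟩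
    · subst h1; subst h2
      have hfun : (fun y => u y ^ 1 * v y ^ 0) = u := by funext yy; simp
      rw [hfun]
      simpa using hub p hp ξ hξa hξN
    · subst h1; subst h2
      have hfun : (fun y => u y ^ 0 * v y ^ 1) = v := by funext yy; simp
      rw [hfun]
      simpa using hvb p hp ξ hξa hξN
  | succ m IH =>
    intro α β hαβ p hp ξ hξa hξN
    rcases Nat.eq_zero_or_pos α with hα | hα
    · subst hα
      have hβ : β = m + 2 := by omega
      have hfun : (fun y => u y ^ 0 * v y ^ β) =
          fun y => (u y ^ 0 * v y ^ (m + 1)) * v y := by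
        funext yy; rw [hβ]; ring
      rw [hfun]
      exact mul_bound a N t ht K m _ v ((hu.pow 0).mul (hv.pow (m + 1))) hv
        (fun q hq ξ' h1 h2 => IH 0 (m + 1) (by omega) q hq ξ' h1 h2) hvb p hp ξ hξa hξN
    · have hfun : (fun y => u y ^ α * v y ^ β) =
          fun y => (u y ^ (α - 1) * v y ^ β) * u y := by
        funext yy
        have h1 : u yy ^ α = u yy ^ (α - 1) * u yy := by
          conv_lhs => rw [show α = (α - 1) + 1 by omega]
          rw [pow_succ]
        rw [h1]; ring
      rw [hfun]
      exact mul_bound a N t ht K m _ u ((hu.pow (α - 1)).mul (hv.pow β)) hu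
        (fun q hq ξ' h1 h2 => IH (α - 1) β (by omega) q hq ξ' h1 h2) hub p hp ξ hξa hξN

end DetSlowAux

open DetSlowAux

/-- Determinant bound for slow parametrizations.  Let `d ≥ 1`,
`μ = (d+1)(d+2)/2`, `ρ = μ(μ-1)/2`, `N ≥ e^C`.  Let `γ = (f,g)` be smooth on
`[a,∞)` with `|f|, |g| ≤ 1` and slow with data `A, B, C`.  Then for any `L > 0`
and points `x_1, …, x_μ ∈ [N, N+L] ∩ [a,∞)`, the determinant of the matrix
`(f(x_j)^{α₁} g(x_j)^{α₂})`, where `α` runs over the `μ` monomials of total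
degree at most `d` (enumerated by `e : Fin μ → ℕ × ℕ`), satisfies
`|Δ| ≤ μ! A^ρ μ^{d(μ-1)} μ^{Bρ} L^ρ (log N)^{Cρ} / N^ρ`. -/
theorem det_slow_le (A B C : ℝ) (hA : 0 ≤ A) (hB : 0 ≤ B) (hC : 0 ≤ C)
    (d μ ρ : ℕ) (hd : 1 ≤ d) (hμ : μ = (d + 1) * (d + 2) / 2) (hρ : ρ = μ * (μ - 1) / 2)
    (a N : ℝ) (hN : Real.exp C ≤ N)
    (f g : ℝ → ℝ)
    (hf : ContDiffOn ℝ (⊤ : ℕ∞) f (Set.Ici a)) (hg : ContDiffOn ℝ (⊤ : ℕ∞) g (Set.Ici a))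
    (hf1 : ∀ x ≥ a, |f x| ≤ 1) (hg1 : ∀ x ≥ a, |g x| ≤ 1)
    (hfb : ∀ (p : ℕ), ∀ x ≥ a,
      |iteratedDerivWithin p f (Set.Ici a) x| / (p.factorial : ℝ) ≤
        (A * (p : ℝ) ^ B * Real.log x ^ C / x) ^ p)
    (hgb : ∀ (p : ℕ), ∀ x ≥ a,
      |iteratedDerivWithin p g (Set.Ici a) x| / (p.factorial : ℝ) ≤
        (A * (p : ℝ) ^ B * Real.log x ^ C / x) ^ p)
    (e : Fin μ → ℕ × ℕ) (he : Function.Injective e)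
    (hed : ∀ k, (e k).1 + (e k).2 ≤ d)
    (hesurj : ∀ α : ℕ × ℕ, α.1 + α.2 ≤ d → ∃ k, e k = α)
    (L : ℝ) (hL : 0 < L) (x : Fin μ → ℝ)
    (hx : ∀ j, x j ∈ Set.Icc N (N + L) ∩ Set.Ici a) :
    |Matrix.det (Matrix.of fun k j : Fin μ => f (x j) ^ (e k).1 * g (x j) ^ (e k).2)| ≤
      (μ.factorial : ℝ) * A ^ ρ * (μ : ℝ) ^ (d * (μ - 1)) * (μ : ℝ) ^ (B * ρ) *
        L ^ ρ * Real.log N ^ (C * ρ) / N ^ ρ := by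
  -- basic facts
  have hN0 : (0:ℝ) < N := lt_of_lt_of_le (Real.exp_pos C) hN
  have hlogN : C ≤ Real.log N := (Real.le_log_iff_exp_le hN0).mpr hN
  have hlog0 : 0 ≤ Real.log N := le_trans hC hlogN
  have hμ3 : 3 ≤ μ := by
    rw [hμ]
    have h6 : 6 ≤ (d + 1) * (d + 2) := Nat.mul_le_mul (show 2 ≤ d + 1 by omega) (show 3 ≤ d + 2 by omega)
    calc 3 = 6 / 2 := by norm_num
      _ ≤ (d + 1) * (d + 2) / 2 := Nat.div_le_div_right h6
  set t : ℝ := A * (μ : ℝ) ^ B * Real.log N ^ C / N with htdef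
  have ht : 0 ≤ t := by
    apply div_nonneg _ hN0.le
    exact mul_nonneg (mul_nonneg hA (Real.rpow_nonneg (Nat.cast_nonneg μ) B))
      (Real.rpow_nonneg hlog0 C)
  -- base bounds
  have hbase : ∀ u : ℝ → ℝ,
      (∀ (p : ℕ), ∀ z ≥ a, |iteratedDerivWithin p u (Set.Ici a) z| / (p.factorial : ℝ) ≤
        (A * (p : ℝ) ^ B * Real.log z ^ C / z) ^ p) →
      ∀ q ≤ μ - 1, ∀ ξ, a ≤ ξ → N ≤ ξ →
        |iteratedDerivWithin q u (Set.Ici a) ξ| ≤ (q.factorial : ℝ) * t ^ q := by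
    intro u hub q hq ξ hξa hξN
    have h1 := hub q ξ hξa
    have hξ0 : (0:ℝ) < ξ := lt_of_lt_of_le hN0 hξN
    have hlogξ0 : 0 ≤ Real.log ξ := le_trans hlog0 (Real.log_le_log hN0 hξN)
    rcases Nat.eq_zero_or_pos q with rfl | hq0
    · simpa using h1
    · have hbb : A * (q : ℝ) ^ B * Real.log ξ ^ C / ξ ≤ t := by
        have heq1 : A * (q : ℝ) ^ B * Real.log ξ ^ C / ξ =
            A * (q : ℝ) ^ B * (Real.log ξ ^ C / ξ) := by ring
        have heq2 : t = A * (μ : ℝ) ^ B * (Real.log N ^ C / N) := by rw [htdef]; ring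
        rw [heq1, heq2]
        have h2 : (q : ℝ) ^ B ≤ (μ : ℝ) ^ B :=
          Real.rpow_le_rpow (Nat.cast_nonneg q) (by exact_mod_cast (by omega : q ≤ μ)) hB
        have h3 : Real.log ξ ^ C / ξ ≤ Real.log N ^ C / N := logpow_anti hC hN hξN
        apply mul_le_mul
        · exact mul_le_mul_of_nonneg_left h2 hA
        · exact h3
        · exact div_nonneg (Real.rpow_nonneg hlogξ0 C) hξ0.le
        · exact mul_nonneg hA (Real.rpow_nonneg (Nat.cast_nonneg μ) B)
      have hb0 : 0 ≤ A * (q : ℝ) ^ B * Real.log ξ ^ C / ξ :=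
        div_nonneg (mul_nonneg (mul_nonneg hA (Real.rpow_nonneg (Nat.cast_nonneg q) B))
          (Real.rpow_nonneg hlogξ0 C)) hξ0.le
      have h4 : (A * (q : ℝ) ^ B * Real.log ξ ^ C / ξ) ^ q ≤ t ^ q :=
        pow_le_pow_left₀ hb0 hbb q
      have h5 := le_trans h1 h4
      have hfacpos : (0:ℝ) < (q.factorial : ℝ) := by exact_mod_cast q.factorial_pos
      rw [div_le_iff₀ hfacpos] at h5
      linarith
  have hfbase := hbase f hfb
  have hgbase := hbase g hgb
  -- row bounds
  have hrow : ∀ k : Fin μ, ∀ p ≤ μ - 1, ∀ ξ, a ≤ ξ → N ≤ ξ →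
      |iteratedDerivWithin p (fun y => f y ^ (e k).1 * g y ^ (e k).2) (Set.Ici a) ξ| ≤
        (p.factorial : ℝ) * ((p : ℝ) + 1) ^ d * t ^ p := by
    intro k p hp ξ hξa hξN
    rcases Nat.eq_zero_or_pos ((e k).1 + (e k).2) with h0 | h0
    · have h1 : (e k).1 = 0 := by omega
      have h2 : (e k).2 = 0 := by omega
      have hfun : (fun y => f y ^ (e k).1 * g y ^ (e k).2) = fun _ => (1:ℝ) := by
        funext yy; rw [h1, h2]; simp
      rw [hfun]
      rcases Nat.eq_zero_or_pos p with rfl | hp0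
      · rw [iteratedDerivWithin_zero]
        norm_num
      · have hzero : iteratedDerivWithin p (fun _ => (1:ℝ)) (Set.Ici a) ξ = 0 := by
          rw [iteratedDerivWithin_eq_iteratedFDerivWithin,
            iteratedFDerivWithin_const_of_ne (n := p) (by omega) _ _]
          simp
        rw [hzero]
        simp only [abs_zero]
        positivity
    · have hm := pow_bound a N t ht (μ - 1) f g hf hg hfbase hgbase
        ((e k).1 + (e k).2 - 1) (e k).1 (e k).2 (by omega) p hp ξ hξa hξN
      refine le_trans hm ?_
      have h9 : ((p : ℝ) + 1) ^ ((e k).1 + (e k).2 - 1) ≤ ((p : ℝ) + 1) ^ d :=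
        pow_le_pow_right₀ (by exact_mod_cast Nat.le_add_left 1 p) (by have := hed k; omega)
      have h10 := mul_le_mul_of_nonneg_right
        (mul_le_mul_of_nonneg_left h9 (by positivity : (0:ℝ) ≤ (p.factorial : ℝ)))
        (by positivity : (0:ℝ) ≤ t ^ p)
      linarith
  -- matrix part
  classical
  set M := Matrix.of fun k j : Fin μ => f (x j) ^ (e k).1 * g (x j) ^ (e k).2 with hMdef
  have hRHS0 : 0 ≤ (μ.factorial : ℝ) * A ^ ρ * (μ : ℝ) ^ (d * (μ - 1)) * (μ : ℝ) ^ (B * ρ) *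
      L ^ ρ * Real.log N ^ (C * ρ) / N ^ ρ := by
    have h1 : (0:ℝ) ≤ Real.log N ^ (C * (ρ:ℝ)) := Real.rpow_nonneg hlog0 _
    have h2 : (0:ℝ) ≤ (μ:ℝ) ^ (B * (ρ:ℝ)) := Real.rpow_nonneg (Nat.cast_nonneg μ) _
    apply div_nonneg _ (by positivity)
    refine mul_nonneg (mul_nonneg (mul_nonneg (mul_nonneg (mul_nonneg ?_ ?_) ?_) h2) ?_) h1
    · positivity
    · exact pow_nonneg hA ρ
    · positivity
    · exact pow_nonneg hL.le ρ
  by_cases hinj : Function.Injective x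
  swap
  · rw [Function.not_injective_iff] at hinj
    obtain ⟨i, j, hxeq, hne⟩ := hinj
    have hdet0 : M.det = 0 :=
      Matrix.det_zero_of_column_eq hne (fun k => by simp only [hMdef, Matrix.of_apply, hxeq])
    rw [hdet0, abs_zero]
    exact hRHS0
  set Cm : Matrix (Fin μ) (Fin μ) ℝ :=
    Matrix.of fun l j : Fin μ =>
      if l ≤ j then (∏ w ∈ (Finset.Iic j).erase l, (x l - x w))⁻¹ else 0 with hCmdef
  have hCtri : Cm.BlockTriangular id := by
    intro i j hij
    simp only [hCmdef, Matrix.of_apply]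
    exact if_neg (not_le.mpr hij)
  set V : ℝ := ∏ j : Fin μ, ∏ w ∈ Finset.Iio j, (x j - x w) with hVdef
  have hV0 : V ≠ 0 := by
    rw [hVdef]
    apply Finset.prod_ne_zero_iff.mpr
    intro j _
    apply Finset.prod_ne_zero_iff.mpr
    intro w hw
    exact sub_ne_zero.mpr fun hxx => (Finset.mem_Iio.mp hw).ne' (hinj hxx)
  have hdiag : ∀ j : Fin μ, Cm j j = (∏ w ∈ Finset.Iio j, (x j - x w))⁻¹ := by
    intro j
    simp only [hCmdef, Matrix.of_apply, le_refl, if_true]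
    rw [Finset.Iic_erase]
  have hdetC : Cm.det = V⁻¹ := by
    rw [Matrix.det_of_upperTriangular hCtri, hVdef, ← Finset.prod_inv_distrib]
    exact Finset.prod_congr rfl fun j _ => hdiag j
  have hdetM : M.det = (M * Cm).det * V := by
    rw [Matrix.det_mul, hdetC]
    field_simp
  have hentry : ∀ k j : Fin μ, |(M * Cm) k j| ≤ (((j:ℕ):ℝ) + 1) ^ d * t ^ (j:ℕ) := by
    intro k j
    set φk : ℝ → ℝ := fun y => f y ^ (e k).1 * g y ^ (e k).2 with hφkdef
    have hφksm : ContDiffOn ℝ (⊤ : ℕ∞) φk (Set.Ici a) := (hf.pow _).mul (hg.pow _)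
    have hmc : (M * Cm) k j = ∑ l ∈ Finset.Iic j, φk (x l) *
        (∏ w ∈ (Finset.Iic j).erase l, (x l - x w))⁻¹ := by
      rw [Matrix.mul_apply]
      have hterm : ∀ l : Fin μ, M k l * Cm l j =
          if l ∈ Finset.Iic j then
            φk (x l) * (∏ w ∈ (Finset.Iic j).erase l, (x l - x w))⁻¹ else 0 := by
        intro l
        simp only [hMdef, hCmdef, Matrix.of_apply, Finset.mem_Iic, hφkdef, mul_ite, mul_zero]
      rw [Finset.sum_congr rfl fun l _ => hterm l, Finset.sum_ite_mem, Finset.univ_inter]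
    set T := (Finset.Iic j).image x with hTdef
    have hinj' : Set.InjOn x ↑(Finset.Iic j) := fun p _ q _ h => hinj h
    have hTcard : T.card = (j:ℕ) + 1 := by
      rw [hTdef, Finset.card_image_of_injOn hinj', Fin.card_Iic]
    have hsum : (M * Cm) k j = ∑ v ∈ T, φk v * (∏ w ∈ T.erase v, (v - w))⁻¹ := by
      rw [hmc, hTdef, Finset.sum_image (fun p hp q hq h => hinj h)]
      refine Finset.sum_congr rfl fun l hl => ?_
      congr 1
      rw [← Finset.image_erase hinj, Finset.prod_image (fun p hp q hq h => hinj h)]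
    have hT0 : T.Nonempty := Finset.card_pos.mp (by omega)
    have hTsub : ↑T ⊆ Set.Icc (max N a) (N + L) := by
      intro v hv
      rw [hTdef] at hv
      simp only [Finset.coe_image, Set.mem_image] at hv
      obtain ⟨l, _, rfl⟩ := hv
      obtain ⟨⟨h1, h2⟩, h3⟩ := hx l
      exact ⟨max_le h1 h3, h2⟩
    obtain ⟨ξ, hξmem, hξeq⟩ := divdiff a (max N a) (N + L) (le_max_right N a) φk hφksm T hT0 hTsub
    have hξa : a ≤ ξ := le_trans (le_max_right N a) hξmem.1
    have hξN : N ≤ ξ := le_trans (le_max_left N a) hξmem.1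
    have hj1 : T.card - 1 = (j:ℕ) := by omega
    rw [hj1] at hξeq
    have hr := hrow k (j:ℕ) (by omega) ξ hξa hξN
    have habs : |(M * Cm) k j| * (((j:ℕ)).factorial : ℝ) =
        |iteratedDerivWithin (j:ℕ) φk (Set.Ici a) ξ| := by
      rw [hsum, ← hξeq, abs_mul]
      congr 1
      exact (abs_of_nonneg (by positivity)).symm
    have hfac : (0:ℝ) < (((j:ℕ)).factorial : ℝ) := by exact_mod_cast Nat.factorial_pos _
    rw [← mul_le_mul_iff_of_pos_right hfac, habs]
    calc |iteratedDerivWithin (j:ℕ) φk (Set.Ici a) ξ|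
        ≤ (((j:ℕ)).factorial : ℝ) * (((j:ℕ):ℝ) + 1) ^ d * t ^ (j:ℕ) := hr
      _ = (((j:ℕ):ℝ) + 1) ^ d * t ^ (j:ℕ) * (((j:ℕ)).factorial : ℝ) := by ring
  have hdetMC : |(M * Cm).det| ≤
      (μ.factorial : ℝ) * ∏ i : Fin μ, ((((i:ℕ):ℝ) + 1) ^ d * t ^ (i:ℕ)) := by
    rw [Matrix.det_apply]
    refine le_trans (Finset.abs_sum_le_sum_abs _ _) ?_
    have hone : ∀ σ : Equiv.Perm (Fin μ), |Equiv.Perm.sign σ • ∏ i, (M * Cm) (σ i) i| ≤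
        ∏ i : Fin μ, ((((i:ℕ):ℝ) + 1) ^ d * t ^ (i:ℕ)) := by
      intro σ
      have habs2 : |Equiv.Perm.sign σ • ∏ i, (M * Cm) (σ i) i| = |∏ i, (M * Cm) (σ i) i| := by
        rcases Int.units_eq_one_or (Equiv.Perm.sign σ) with h | h <;> simp [h]
      rw [habs2, Finset.abs_prod]
      exact Finset.prod_le_prod (fun i _ => abs_nonneg _) (fun i _ => hentry (σ i) i)
    refine le_trans (Finset.sum_le_sum fun σ _ => hone σ) ?_
    rw [Finset.sum_const, Finset.card_univ, Fintype.card_perm, Fintype.card_fin, nsmul_eq_mul]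
  have hsumid : ∑ i : Fin μ, (i:ℕ) = ρ := by
    rw [Fin.sum_univ_eq_sum_range (fun i => i) μ, Finset.sum_range_id]
    exact hρ.symm
  have hprodfac : ∏ i : Fin μ, (((i:ℕ):ℝ) + 1) = (μ.factorial : ℝ) := by
    rw [Fin.prod_univ_eq_prod_range (fun i => ((i:ℝ) + 1)) μ, ← Finset.prod_range_add_one_eq_factorial]
    push_cast
    rfl
  have hprod : ∏ i : Fin μ, ((((i:ℕ):ℝ) + 1) ^ d * t ^ (i:ℕ)) =
      (μ.factorial : ℝ) ^ d * t ^ ρ := by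
    rw [Finset.prod_mul_distrib, Finset.prod_pow, hprodfac, Finset.prod_pow_eq_pow_sum, hsumid]
  have hVle : |V| ≤ L ^ ρ := by
    rw [hVdef, Finset.abs_prod]
    have hin : ∀ j : Fin μ, |∏ w ∈ Finset.Iio j, (x j - x w)| ≤ L ^ (j:ℕ) := by
      intro j
      rw [Finset.abs_prod]
      calc ∏ w ∈ Finset.Iio j, |x j - x w| ≤ ∏ _w ∈ Finset.Iio j, L := by
            apply Finset.prod_le_prod (fun w _ => abs_nonneg _)
            intro w _
            obtain ⟨⟨ha1, ha2⟩, _⟩ := hx j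
            obtain ⟨⟨hb1, hb2⟩, _⟩ := hx w
            rw [abs_le]
            constructor <;> linarith
        _ = L ^ (j:ℕ) := by rw [Finset.prod_const, Fin.card_Iio]
    calc ∏ j : Fin μ, |∏ w ∈ Finset.Iio j, (x j - x w)| ≤ ∏ j : Fin μ, L ^ (j:ℕ) :=
          Finset.prod_le_prod (fun j _ => abs_nonneg _) (fun j _ => hin j)
      _ = L ^ ρ := by rw [Finset.prod_pow_eq_pow_sum, hsumid]
  have hfinal : |M.det| ≤ (μ.factorial : ℝ) * ((μ.factorial : ℝ) ^ d * t ^ ρ) * L ^ ρ := by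
    rw [hdetM, abs_mul]
    have h1 : |(M * Cm).det| ≤ (μ.factorial : ℝ) * ((μ.factorial : ℝ) ^ d * t ^ ρ) := by
      rw [← hprod]; exact hdetMC
    exact mul_le_mul h1 hVle (abs_nonneg _) (by positivity)
  refine le_trans hfinal ?_
  have hfd : ((μ.factorial : ℝ)) ^ d ≤ (μ:ℝ) ^ (d * (μ - 1)) := by
    have h1 : (μ.factorial) ^ d ≤ (μ ^ (μ - 1)) ^ d := Nat.pow_le_pow_left (fact_le μ) d
    rw [← pow_mul] at h1
    calc ((μ.factorial : ℝ)) ^ d = ((μ.factorial ^ d : ℕ) : ℝ) := by push_cast; rfl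
      _ ≤ ((μ ^ ((μ - 1) * d) : ℕ) : ℝ) := by exact_mod_cast h1
      _ = (μ:ℝ) ^ (d * (μ - 1)) := by rw [Nat.mul_comm (μ - 1) d]; push_cast; rfl
  have hexp : t ^ ρ = A ^ ρ * (μ:ℝ) ^ (B * (ρ:ℝ)) * Real.log N ^ (C * (ρ:ℝ)) / N ^ ρ := by
    rw [htdef, div_pow, mul_pow, mul_pow]
    rw [← Real.rpow_natCast ((μ:ℝ) ^ B) ρ, ← Real.rpow_natCast (Real.log N ^ C) ρ,
      ← Real.rpow_mul (Nat.cast_nonneg μ), ← Real.rpow_mul hlog0]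
  calc (μ.factorial : ℝ) * ((μ.factorial : ℝ) ^ d * t ^ ρ) * L ^ ρ
      ≤ (μ.factorial : ℝ) * ((μ:ℝ) ^ (d * (μ - 1)) * t ^ ρ) * L ^ ρ := by
        exact mul_le_mul_of_nonneg_right
          (mul_le_mul_of_nonneg_left (mul_le_mul_of_nonneg_right hfd (pow_nonneg ht ρ))
            (by positivity)) (pow_nonneg hL.le ρ)
    _ = (μ.factorial : ℝ) * A ^ ρ * (μ : ℝ) ^ (d * (μ - 1)) * (μ : ℝ) ^ (B * ρ) *
        L ^ ρ * Real.log N ^ (C * ρ) / N ^ ρ := by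
        rw [hexp]
        push_cast
        ring
end

section
/- Let φ : [a,∞) → ℝ. Define a sequence by x_0 = N ≥ max(a, e) and x_{n+1} = x_n + c · x_n/(log x_n)^C · T^{-ν}, where c > 0, C ≥ 0, T ≥ 1, ν ≥ 0. Let n(T) be the least n with x_n ≥ φ(T) (assuming φ(T) ≥ x_0). Then n(T) ≤ T^ν (log φ(T))^{C+1} / (log 2 · min(1, c)) + 1. -/
/-!
Each step multiplies `x_n` by `1 + u_n` with `u_n = c T^{-ν} / (log x_n)^C`. While `x_n ≤ φ(T)`
we have `u_n ≥ c t` for `t = T^{-ν} / (log φ(T))^C ≤ 1`, and concavity of `log` gives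
`log (1 + u) ≥ log 2 · min 1 u`, so `log x_n` grows by at least `δ = log 2 · min 1 c · t`
per step.
Since `log x_0 ≥ 0`, at most `log φ(T) / δ` steps fit before `x_n` reaches `φ(T)`.
-/

open Real

theorem Real.log_two_mul_min_one_le_log_one_add {u : ℝ} (hu : 0 ≤ u) :
    log 2 * min 1 u ≤ log (1 + u) := by
  rcases le_total 1 u with h | h
  · rw [min_eq_left h, mul_one]
    exact log_le_log two_pos (by linarith)
  · rw [min_eq_right h, mul_comm, ← log_rpow two_pos]
    have bernoulli : (1 + 1 : ℝ) ^ u ≤ 1 + u * 1 :=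
      rpow_one_add_le_one_add_mul_self (by norm_num) hu h
    rw [one_add_one_eq_two, mul_one] at bernoulli
    exact log_le_log (by positivity) bernoulli

theorem add_mul_le_of_forall_add_le {y : ℕ → ℝ} {δ : ℝ} {m : ℕ}
    (h : ∀ k < m, y k + δ ≤ y (k + 1)) : y 0 + m * δ ≤ y m := by
  induction m with
  | zero => simp
  | succ m ih =>
    push_cast
    linarith [ih fun k hk => h k (by omega), h m m.lt_succ_self]

section Recursion

variable {c C T ν : ℝ}

theorem apply_zero_le_apply_of_rec {x : ℕ → ℝ} (hc : 0 ≤ c) (hT : 0 ≤ T) (h0 : 1 ≤ x 0)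
    (hrec : ∀ n, x (n + 1) = x n + c * x n / log (x n) ^ C * T ^ (-ν)) (n : ℕ) :
    x 0 ≤ x n := by
  induction n with
  | zero => rfl
  | succ n ih =>
    have hlog : 0 ≤ log (x n) := log_nonneg (h0.trans ih)
    have hxn : 0 ≤ x n := by linarith
    have : 0 ≤ c * x n / log (x n) ^ C * T ^ (-ν) := by positivity
    linarith [hrec n]

theorem log_add_le_log_rec_step {y φ : ℝ} (hc : 0 ≤ c) (hC : 0 ≤ C) (hT : 1 ≤ T)
    (hν : 0 ≤ ν) (hy : 1 < y) (hyφ : y ≤ φ) (hφ : 1 ≤ log φ) :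
    log y + log 2 * min 1 c * (T ^ (-ν) / log φ ^ C) ≤
      log (y + c * y / log y ^ C * T ^ (-ν)) := by
  set u := c / log y ^ C * T ^ (-ν)
  set t := T ^ (-ν) / log φ ^ C
  have hlogy : 0 < log y := log_pos hy
  have hTν : 0 < T ^ (-ν) := by positivity
  have hu : 0 ≤ u := by positivity
  have ht : 0 ≤ t := by positivity
  have hsplit : log (y + c * y / log y ^ C * T ^ (-ν)) = log y + log (1 + u) := by
    rw [← log_mul (by positivity) (by positivity)]
    congr 1
    ring
  have hCφ : 1 ≤ log φ ^ C := one_le_rpow hφ hC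
  have ht1 : t ≤ 1 :=
    div_le_one_of_le₀ ((rpow_le_one_of_one_le_of_nonpos hT (by linarith)).trans hCφ)
      (by positivity)
  have hct : c * t ≤ u := by
    have hCy : log y ^ C ≤ log φ ^ C := rpow_le_rpow hlogy.le (log_le_log (by linarith) hyφ) hC
    calc c * t = c * T ^ (-ν) / log φ ^ C := by ring
      _ ≤ c * T ^ (-ν) / log y ^ C := by gcongr
      _ = u := by ring
  have hmin : min 1 c * t ≤ min 1 u := by
    rw [min_mul_of_nonneg _ _ ht, one_mul]
    exact min_le_min ht1 hct
  rw [hsplit, mul_assoc]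
  have hl2 : 0 ≤ log 2 := log_nonneg one_le_two
  linarith [mul_le_mul_of_nonneg_left hmin hl2, Real.log_two_mul_min_one_le_log_one_add hu]

end Recursion

theorem nT_le_general (a c C T ν N φT : ℝ) (hc : 0 < c) (hC : 0 ≤ C) (hT : 1 ≤ T) (hν : 0 ≤ ν)
    (hN : max a (Real.exp 1) ≤ N)
    (x : ℕ → ℝ) (hx0 : x 0 = N)
    (hrec : ∀ n, x (n + 1) = x n + c * x n / Real.log (x n) ^ C * T ^ (-ν))
    (hφ : x 0 ≤ φT)
    (nT : ℕ) (hleast : ∀ m < nT, x m < φT) :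
    (nT : ℝ) ≤ T ^ ν * Real.log φT ^ (C + 1) / (Real.log 2 * min 1 c) + 1 := by
  have hx0e : exp 1 ≤ x 0 := hx0 ▸ (le_max_right a _).trans hN
  have hone_lt_e : 1 < exp 1 := one_lt_exp_iff.2 one_pos
  have hx0_one : 1 ≤ x 0 := hone_lt_e.le.trans hx0e
  have hx_gt_one (n : ℕ) : 1 < x n :=
    hone_lt_e.trans_le (hx0e.trans (apply_zero_le_apply_of_rec hc.le (by linarith) hx0_one hrec n))
  have hlogφ : 1 ≤ log φT := (le_log_iff_exp_le (by linarith)).2 (hx0e.trans hφ)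
  set δ := log 2 * min 1 c * (T ^ (-ν) / log φT ^ C) with hδ_def
  have hδ : 0 < δ := by
    have : 0 < T := by linarith
    positivity
  set m := nT - 1
  have hxm : x m ≤ φT := by
    rcases Nat.eq_zero_or_pos nT with h | h
    · simpa [m, h] using hφ
    · exact (hleast m (by omega)).le
  have hgrowth : log (x 0) + m * δ ≤ log (x m) := add_mul_le_of_forall_add_le fun k hk =>
    hrec k ▸ log_add_le_log_rec_step hc.le hC hT hν (hx_gt_one k) (hleast k (by omega)).le hlogφ
  have hmδ : (m : ℝ) * δ ≤ log φT := by
    linarith [log_nonneg hx0_one, log_le_log (by linarith [hx_gt_one m]) hxm]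
  calc (nT : ℝ) ≤ m + 1 := by norm_cast; omega
    _ ≤ log φT / δ + 1 := by gcongr; exact (le_div_iff₀ hδ).2 hmδ
    _ = T ^ ν * log φT ^ (C + 1) / (log 2 * min 1 c) + 1 := by
      rw [hδ_def, rpow_add_one (by linarith), rpow_neg (by linarith)]
      field_simp

/-- Let `x_0 = N ≥ max(a, e)` and `x_{n+1} = x_n + c x_n/(log x_n)^C · T^{-ν}`,
with `c > 0`, `C ≥ 0`, `T ≥ 1`, `ν ≥ 0`.  If `n(T)` is the least `n` with
`x_n ≥ φ(T)` (and `φ(T) ≥ x_0`), then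
`n(T) ≤ T^ν (log φ(T))^{C+1} / (log 2 · min 1 c) + 1`. -/
theorem nT_le (a c C T ν N φT : ℝ) (hc : 0 < c) (hC : 0 ≤ C) (hT : 1 ≤ T) (hν : 0 ≤ ν)
    (hN : max a (Real.exp 1) ≤ N)
    (x : ℕ → ℝ) (hx0 : x 0 = N)
    (hrec : ∀ n, x (n + 1) = x n + c * x n / Real.log (x n) ^ C * T ^ (-ν))
    (hφ : x 0 ≤ φT)
    (nT : ℕ) (hnT : φT ≤ x nT) (hleast : ∀ m < nT, x m < φT) :
    (nT : ℝ) ≤ T ^ ν * Real.log φT ^ (C + 1) / (Real.log 2 * min 1 c) + 1 :=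
  nT_le_general a c C T ν N φT hc hC hT hν hN x hx0 hrec hφ nT hleast
end

section
/- Let a > 1 and λ = 1/2 − 1/(2a) ∈ (0,1/2). For every x ≥ a, every integer n ≥ 1, and every integer p ≥ 1, one has (log n)^p / n^{λx} ≤ p^p / (λ e x)^p (interpreting the left side as 0 when n = 1). Consequently, the p-th derivative of the Riemann zeta function satisfies, for all x ≥ a and p ≥ 1, |ζ^{(p)}(x)| ≤ (ζ((a+1)/2)/(λe))^p · p^p / x^p. -/
/-- The real Riemann zeta function `ζ(x) = ∑_{n ≥ 1} n^{-x}`. -/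
noncomputable def realZeta (x : ℝ) : ℝ := ∑' n : ℕ, ((n : ℝ) + 1) ^ (-x)

/-!
Writing `t = log n`, the function `t ↦ t ^ p e^{-c t}` is maximal at `t = p / c`, which gives
`(log n) ^ p / n ^ c ≤ (p / (c e)) ^ p`. For the derivatives of `ζ`, differentiate the Dirichlet
series termwise and split `n ^ {-x} = n ^ {-λ x} n ^ {-(1 - λ) x}`: the first factor absorbs
`(log n) ^ p` at the cost of `(p / (λ e x)) ^ p`, and the second is at most `n ^ {-(a + 1) / 2}`
because `(1 - λ) x ≥ (a + 1) / 2`. Finally `ζ((a + 1) / 2) ≥ 1`, so one factor `ζ((a + 1) / 2)` is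
at most its `p`-th power.
-/

open Real

lemma pow_le_mul_exp {c t : ℝ} (hc : 0 < c) (ht : 0 ≤ t) (p : ℕ) :
    t ^ p ≤ (p / (c * exp 1)) ^ p * exp (c * t) := by
  rcases p.eq_zero_or_pos with rfl | hp
  · simpa using one_le_exp (by positivity)
  have hp0 : (0 : ℝ) < p := by exact_mod_cast hp
  have hu : c * t / p ≤ exp (c * t / p - 1) := by linarith [add_one_le_exp (c * t / p - 1)]
  calc t ^ p = (p / c) ^ p * (c * t / p) ^ p := by rw [← mul_pow]; field_simp
    _ ≤ (p / c) ^ p * exp (c * t / p - 1) ^ p := by gcongr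
    _ = (p / (c * exp 1)) ^ p * exp (c * t) := by
      rw [← exp_nat_mul, show (p : ℝ) * (c * t / p - 1) = c * t - p * 1 by field_simp, exp_sub,
        exp_nat_mul, div_pow, div_pow, mul_pow]
      field_simp

lemma log_pow_div_rpow_le {y c : ℝ} (hy : 1 ≤ y) (hc : 0 < c) (p : ℕ) :
    log y ^ p / y ^ c ≤ (p / (c * exp 1)) ^ p := by
  rw [rpow_def_of_pos (by linarith), mul_comm, div_le_iff₀ (exp_pos _)]
  exact pow_le_mul_exp hc (log_nonneg hy) p

lemma log_pow_mul_rpow_neg_le {y s c x : ℝ} (hy : 1 ≤ y) (hc : 0 < c) (hx : s + c ≤ x)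
    (p : ℕ) : log y ^ p * y ^ (-x) ≤ (p / (c * exp 1)) ^ p * y ^ (-s) := by
  have hy0 : 0 < y := by linarith
  calc log y ^ p * y ^ (-x) ≤ log y ^ p * y ^ (-c + -s) := by
        gcongr
        · exact pow_nonneg (log_nonneg hy) p
        · linarith
    _ = log y ^ p / y ^ c * y ^ (-s) := by rw [rpow_add hy0, rpow_neg hy0.le]; ring
    _ ≤ (p / (c * exp 1)) ^ p * y ^ (-s) := by
        gcongr
        exact log_pow_div_rpow_le hy hc p

lemma one_le_natCast_add_one (n : ℕ) : (1 : ℝ) ≤ n + 1 :=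
  le_add_of_nonneg_left n.cast_nonneg

lemma summable_natCast_add_one_rpow_neg {s : ℝ} (hs : 1 < s) :
    Summable fun n : ℕ => ((n : ℝ) + 1) ^ (-s) := by
  have h := (summable_nat_add_iff 1).mpr (summable_nat_rpow.mpr (by linarith : -s < -1))
  exact_mod_cast h

lemma one_le_realZeta {s : ℝ} (hs : 1 < s) : 1 ≤ realZeta s := by
  simpa [realZeta] using (summable_natCast_add_one_rpow_neg hs).le_tsum 0
    fun n _ => rpow_nonneg (by positivity) _

lemma summable_log_pow_mul_rpow_neg (p : ℕ) {x : ℝ} (hx : 1 < x) :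
    Summable fun n : ℕ => log ((n : ℝ) + 1) ^ p * ((n : ℝ) + 1) ^ (-x) := by
  refine .of_nonneg_of_le (fun n => ?_) (fun n => ?_)
    ((summable_natCast_add_one_rpow_neg (s := (1 + x) / 2) (by linarith)).mul_left
      ((p / ((x - 1) / 2 * exp 1)) ^ p))
  · exact mul_nonneg (pow_nonneg (log_nonneg (one_le_natCast_add_one n)) p)
      (rpow_nonneg (by positivity) _)
  · exact log_pow_mul_rpow_neg_le (c := (x - 1) / 2) (one_le_natCast_add_one n)
      (by linarith) (by linarith) p

lemma norm_neg_log_pow_mul_rpow_neg (p n : ℕ) (x : ℝ) :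
    ‖(-log ((n : ℝ) + 1)) ^ p * ((n : ℝ) + 1) ^ (-x)‖
      = log ((n : ℝ) + 1) ^ p * ((n : ℝ) + 1) ^ (-x) := by
  rw [norm_mul, norm_pow, norm_neg, norm_of_nonneg (log_nonneg (one_le_natCast_add_one n)),
    norm_of_nonneg (rpow_nonneg (by positivity) _)]

lemma iteratedDeriv_realZeta (p : ℕ) {x : ℝ} (hx : 1 < x) :
    iteratedDeriv p realZeta x
      = ∑' n : ℕ, (-log ((n : ℝ) + 1)) ^ p * ((n : ℝ) + 1) ^ (-x) := by
  induction p generalizing x with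
  | zero => simp [realZeta]
  | succ p ih =>
    have hEq : iteratedDeriv p realZeta =ᶠ[nhds x]
        fun y => ∑' n : ℕ, (-log ((n : ℝ) + 1)) ^ p * ((n : ℝ) + 1) ^ (-y) := by
      filter_upwards [Ioi_mem_nhds hx] with y hy using ih hy
    rw [iteratedDeriv_succ, hEq.deriv_eq]
    set c := (1 + x) / 2
    have hc : c ∈ Set.Ioi 1 := by simp only [Set.mem_Ioi, c]; linarith
    have hcx : x ∈ Set.Ioi c := by simp only [Set.mem_Ioi, c]; linarith
    refine (hasDerivAt_tsum_of_isPreconnected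
      (u := fun n : ℕ => log ((n : ℝ) + 1) ^ (p + 1) * ((n : ℝ) + 1) ^ (-c))
      (g' := fun (n : ℕ) (y : ℝ) => (-log ((n : ℝ) + 1)) ^ (p + 1) * ((n : ℝ) + 1) ^ (-y))
      (summable_log_pow_mul_rpow_neg (p + 1) hc) isOpen_Ioi isPreconnected_Ioi
      (fun n y _ => ?_) (fun n y hy => ?_) hcx ?_ hcx).deriv
    · exact (((hasDerivAt_neg y).const_rpow (by positivity)).const_mul _).congr_deriv (by ring)
    · rw [norm_neg_log_pow_mul_rpow_neg]
      exact mul_le_mul_of_nonneg_left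
        (rpow_le_rpow_of_exponent_le (one_le_natCast_add_one n) (neg_le_neg hy.out.le))
        (pow_nonneg (log_nonneg (one_le_natCast_add_one n)) _)
    · refine .of_norm ((summable_log_pow_mul_rpow_neg p (hc.trans hcx)).congr fun n => ?_)
      rw [norm_neg_log_pow_mul_rpow_neg]

theorem abs_iteratedDeriv_realZeta_le {s c x : ℝ} (hs : 1 < s) (hc : 0 < c) (hx : s + c ≤ x)
    (p : ℕ) : |iteratedDeriv p realZeta x| ≤ (p / (c * exp 1)) ^ p * realZeta s := by
  rw [iteratedDeriv_realZeta p (by linarith), ← norm_eq_abs]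
  refine tsum_of_norm_bounded ((summable_natCast_add_one_rpow_neg hs).hasSum.mul_left _)
    fun n => ?_
  rw [norm_neg_log_pow_mul_rpow_neg]
  exact log_pow_mul_rpow_neg_le (one_le_natCast_add_one n) hc hx p

/-- Let `a > 1` and `λ = 1/2 − 1/(2a)`.  Then for `x ≥ a`, `n ≥ 1` and `p ≥ 1`,
`(log n)^p / n^{λx} ≤ p^p / (λ e x)^p`; consequently the `p`-th derivative of the
Riemann zeta function satisfies `|ζ^{(p)}(x)| ≤ (ζ((a+1)/2)/(λ e))^p p^p / x^p`. -/
theorem zeta_deriv_bound (a : ℝ) (ha : 1 < a) :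
    (∀ x ≥ a, ∀ n : ℕ, 1 ≤ n → ∀ p : ℕ, 1 ≤ p →
      Real.log n ^ p / (n : ℝ) ^ ((1 / 2 - 1 / (2 * a)) * x) ≤
        (p : ℝ) ^ p / ((1 / 2 - 1 / (2 * a)) * Real.exp 1 * x) ^ p) ∧
    (∀ x ≥ a, ∀ p : ℕ, 1 ≤ p →
      |iteratedDeriv p realZeta x| ≤
        (realZeta ((a + 1) / 2) / ((1 / 2 - 1 / (2 * a)) * Real.exp 1)) ^ p *
          (p : ℝ) ^ p / x ^ p) := by
  set l : ℝ := 1 / 2 - 1 / (2 * a) with hl_def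
  have hl : 0 < l := by
    have : 1 / (2 * a) < 1 / 2 := by gcongr; linarith
    linarith [hl_def]
  refine ⟨fun x hx n hn p _ => ?_, fun x hx p hp => ?_⟩ <;> have hx0 : 0 < x := by linarith
  · rw [← mul_right_comm, ← div_pow]
    exact log_pow_div_rpow_le (by exact_mod_cast hn) (by positivity) p
  · have hsplit : (a + 1) / 2 + l * x ≤ x := by
      have : 1 / (2 * a) * a ≤ 1 / (2 * a) * x := by gcongr
      have : 1 / (2 * a) * a = 1 / 2 := by field_simp
      have : l * x = x / 2 - 1 / (2 * a) * x := by rw [hl_def]; ring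
      linarith
    have hζ : 1 ≤ realZeta ((a + 1) / 2) := one_le_realZeta (by linarith)
    calc |iteratedDeriv p realZeta x|
        ≤ (p / (l * x * exp 1)) ^ p * realZeta ((a + 1) / 2) :=
          abs_iteratedDeriv_realZeta_le (by linarith) (by positivity) hsplit p
      _ ≤ (p / (l * x * exp 1)) ^ p * realZeta ((a + 1) / 2) ^ p := by
          gcongr
          exact le_self_pow₀ hζ (by omega)
      _ = _ := by rw [div_pow, div_pow, mul_pow, mul_pow, mul_pow]; ring
end

section
/- Let a > 1 and λ = 1/2 − 1/(2a). For every x ≥ a, ζ(x) − 1 ≤ (ζ((a+1)/2) − 1) · 2^{-λx}. Consequently, if T ≥ 1 and x ≥ log(m_a T)/(λ log 2), where m_a = ζ((a+1)/2) − 1, and if ζ(x) is a rational number, then the height of ζ(x) is at least T. -/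
/-- The height of a rational number `p/q` in lowest terms is `max |p| |q|`. -/
def qheight (q : ℚ) : ℕ := max q.num.natAbs q.den

/-!
For `n ≥ 2` write `n^{-x} = n^{-(x-t)} n^{-t} ≤ n^{-(x-t)} 2^{-t}`; with `t = λx` one has
`x - t ≥ (a+1)/2`, so `ζ(x) - 1 ≤ m_a 2^{-λx}`. A rational `ζ(x) = p/q` exceeds `1`, hence
`ζ(x) - 1 = (p-q)/q ≥ 1/q ≥ 1/height`, while the lower bound on `x` makes `m_a 2^{-λx} ≤ 1/T`.
-/

open Real

section realZeta

variable {x y t : ℝ}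

theorem summable_nat_add_rpow_neg (k : ℕ) (hx : 1 < x) :
    Summable fun n : ℕ => ((n : ℝ) + k) ^ (-x) := by
  have h := (summable_nat_add_iff k).2 ((Real.summable_nat_rpow (p := -x)).2 (by linarith))
  exact h.congr fun n => by push_cast; rfl

theorem summable_nat_add_two_rpow_neg (hx : 1 < x) :
    Summable fun n : ℕ => ((n : ℝ) + 2) ^ (-x) := by
  simpa using summable_nat_add_rpow_neg 2 hx

theorem realZeta_sub_one_eq_tsum (hx : 1 < x) :
    realZeta x - 1 = ∑' n : ℕ, ((n : ℝ) + 2) ^ (-x) := by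
  have hs : Summable fun n : ℕ => ((n : ℝ) + 1) ^ (-x) := by
    simpa using summable_nat_add_rpow_neg 1 hx
  rw [realZeta, hs.tsum_eq_zero_add]
  norm_num [add_assoc, one_add_one_eq_two]

theorem realZeta_sub_one_pos (hx : 1 < x) : 0 < realZeta x - 1 := by
  rw [realZeta_sub_one_eq_tsum hx]
  exact (summable_nat_add_two_rpow_neg hx).tsum_pos (fun n => by positivity) 0 (by positivity)

theorem realZeta_sub_one_le_mul_two_rpow_neg (hy : 1 < y) (ht : 0 ≤ t) (hyx : y + t ≤ x) :
    realZeta x - 1 ≤ (realZeta y - 1) * 2 ^ (-t) := by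
  have hx : 1 < x := by linarith
  rw [realZeta_sub_one_eq_tsum hx, realZeta_sub_one_eq_tsum hy, ← tsum_mul_right]
  refine (summable_nat_add_two_rpow_neg hx).tsum_le_tsum (fun n => ?_)
    ((summable_nat_add_two_rpow_neg hy).mul_right _)
  have hn : (2 : ℝ) ≤ (n : ℝ) + 2 := le_add_of_nonneg_left n.cast_nonneg
  calc ((n : ℝ) + 2) ^ (-x) = ((n : ℝ) + 2) ^ (-(x - t)) * ((n : ℝ) + 2) ^ (-t) := by
        rw [← Real.rpow_add (by positivity)]; ring_nf
    _ ≤ ((n : ℝ) + 2) ^ (-y) * 2 ^ (-t) := by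
        gcongr ?_ * ?_
        · exact Real.rpow_le_rpow_of_exponent_le (by linarith) (by linarith)
        · exact Real.rpow_le_rpow_of_nonpos two_pos hn (by linarith)

end realZeta

theorem inv_qheight_le_sub_one {q : ℚ} (hq : 1 < q) : ((qheight q : ℝ))⁻¹ ≤ q - 1 := by
  have hden : (0 : ℝ) < q.den := by exact_mod_cast q.pos
  have hnum : (q.den : ℝ) + 1 ≤ q.num := by
    have := Rat.num_div_den q ▸ hq
    rw [Rat.lt_div_iff (by exact_mod_cast q.pos), one_mul] at this
    have hZ : (q.den : ℤ) + 1 ≤ q.num := Int.add_one_le_of_lt (by exact_mod_cast this)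
    exact_mod_cast hZ
  have hden_le : (q.den : ℝ) ≤ qheight q := by exact_mod_cast le_max_right _ _
  calc ((qheight q : ℝ))⁻¹ ≤ (q.den : ℝ)⁻¹ := inv_anti₀ hden hden_le
    _ ≤ ((q.num : ℝ) - q.den) / q.den := by
        rw [inv_eq_one_div]
        gcongr
        linarith
    _ = q - 1 := by
        rw [sub_div, div_self hden.ne', Rat.cast_def]

theorem le_rpow_of_log_div_le {b c y x : ℝ} (hb : 1 < b) (hc : 0 < c) (hy : 0 < y)
    (h : log y / (c * log b) ≤ x) : y ≤ b ^ (c * x) := by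
  have hlogb : 0 < log b := log_pos hb
  rw [div_le_iff₀ (by positivity)] at h
  rw [← log_le_log_iff hy (by positivity), log_rpow (by linarith)]
  linarith

/-- Let `a > 1` and `λ = 1/2 − 1/(2a)`.  For every `x ≥ a`,
`ζ(x) − 1 ≤ (ζ((a+1)/2) − 1) · 2^{-λx}`.  Consequently, with
`m_a = ζ((a+1)/2) − 1`, if `T ≥ 1` and `x ≥ log(m_a T)/(λ log 2)` and `ζ(x)` is
rational, then the height of `ζ(x)` is at least `T`. -/
theorem zeta_height_control (a : ℝ) (ha : 1 < a) :
    (∀ x ≥ a, realZeta x - 1 ≤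
      (realZeta ((a + 1) / 2) - 1) * (2 : ℝ) ^ (-((1 / 2 - 1 / (2 * a)) * x))) ∧
    (∀ T : ℝ, 1 ≤ T → ∀ x ≥ a,
      Real.log ((realZeta ((a + 1) / 2) - 1) * T) / ((1 / 2 - 1 / (2 * a)) * Real.log 2)
        ≤ x →
      ∀ q : ℚ, realZeta x = (q : ℝ) → T ≤ (qheight q : ℝ)) := by
  set lam : ℝ := 1 / 2 - 1 / (2 * a) with hlam_def
  set m := realZeta ((a + 1) / 2) - 1
  have hlam : 0 < lam := by
    have : 1 / (2 * a) < 1 / 2 := one_div_lt_one_div_of_lt two_pos (by linarith)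
    rw [hlam_def]
    linarith
  have hm : 0 < m := realZeta_sub_one_pos (by linarith)
  have hexponent : ∀ x ≥ a, (a + 1) / 2 + lam * x ≤ x := fun x hx => by
    have : 1 / 2 ≤ x * (1 / (2 * a)) := by
      rw [mul_one_div, le_div_iff₀ (by linarith)]
      linarith
    rw [hlam_def]
    linarith
  have decay : ∀ x ≥ a, realZeta x - 1 ≤ m * 2 ^ (-(lam * x)) := fun x hx =>
    realZeta_sub_one_le_mul_two_rpow_neg (by linarith) (mul_nonneg hlam.le (by linarith))
      (hexponent x hx)
  refine ⟨decay, fun T hT x hx hlog q hq => ?_⟩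
  have hT : 0 < T := by linarith
  have hmT : m * T ≤ 2 ^ (lam * x) := le_rpow_of_log_div_le one_lt_two hlam (by positivity) hlog
  have hq1 : (1 : ℚ) < q := by
    exact_mod_cast hq ▸ sub_pos.1 (realZeta_sub_one_pos (by linarith))
  have hheight : ((qheight q : ℝ))⁻¹ ≤ T⁻¹ :=
    calc ((qheight q : ℝ))⁻¹ ≤ q - 1 := inv_qheight_le_sub_one hq1
      _ = realZeta x - 1 := by rw [hq]
      _ ≤ m * 2 ^ (-(lam * x)) := decay x hx
      _ ≤ T⁻¹ := by
        rw [rpow_neg zero_le_two, ← div_eq_mul_inv, div_le_iff₀ (by positivity),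
          inv_mul_eq_div, le_div_iff₀ hT]
        exact hmT
  exact (inv_le_inv₀ (by exact_mod_cast lt_of_lt_of_le q.pos (le_max_right _ _)) hT).1 hheight
end

section
/- Let a > 1 and let f, g : [a,∞) → ℝ be smooth functions that are slow with data (A₁,B₁,C₁,D₁) and (A₂,B₂,C₂,D₂) respectively, i.e., |f^{(p)}(x)/p!| ≤ D₁(A₁ p^{B₁}(log x)^{C₁}/x)^p and similarly for g, for all p ≥ 0 and x ≥ a. Then f + g and f·g are slow, and f' is slow on [a,∞); that is, the set of slow functions on [a,∞) is a subalgebra of C^∞([a,∞)) closed under differentiation. -/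
open Real Set

private lemma log_rpow_div_le {a x C : ℝ} (ha : 1 < a) (hax : a ≤ x) (hC : 0 ≤ C) :
    Real.log x ^ C / x ≤ max 1 (C ^ C) := by
  have hx1 : 1 < x := ha.trans_le hax
  have hx0 : 0 < x := by linarith
  have hL : 0 < Real.log x := Real.log_pos hx1
  rcases eq_or_lt_of_le hC with hC0 | hC0
  · rw [← hC0, Real.rpow_zero]
    have h : 1 / x ≤ 1 := by rw [div_le_one hx0]; linarith
    exact h.trans (le_max_left _ _)
  · have key : Real.log x ^ C ≤ C ^ C * x := by
      have h1 : Real.log (Real.log x / C) ≤ Real.log x / C - 1 :=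
        Real.log_le_sub_one_of_pos (by positivity)
      have h2 : Real.log (Real.log x) - Real.log C ≤ Real.log x / C - 1 := by
        rwa [Real.log_div hL.ne' hC0.ne'] at h1
      have h3 : Real.log (Real.log x) * C ≤ Real.log C * C + Real.log x := by
        have h4 := mul_le_mul_of_nonneg_left h2 hC
        have hx' : C * (Real.log x / C) = Real.log x := by field_simp
        nlinarith
      calc Real.log x ^ C = Real.exp (Real.log (Real.log x) * C) := by
            rw [Real.rpow_def_of_pos hL]
        _ ≤ Real.exp (Real.log C * C + Real.log x) := Real.exp_le_exp.2 h3
        _ = C ^ C * x := by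
            rw [Real.exp_add, Real.exp_log hx0, Real.rpow_def_of_pos hC0]
    have h5 : Real.log x ^ C / x ≤ C ^ C := by
      rw [div_le_iff₀ hx0]; exact key
    exact h5.trans (le_max_right _ _)

private lemma base_le {a x : ℝ} (ha : 1 < a) (hax : a ≤ x)
    {A₁ B₁ C₁ B C A : ℝ} (hA₁ : 0 ≤ A₁) (hB₁ : 0 ≤ B₁) (hBB : B₁ ≤ B) (hCC : C₁ ≤ C)
    (hA : A₁ * max 1 (Real.log a ^ (C₁ - C)) ≤ A)
    {i p : ℕ} (hip : i ≤ p) (hp : 1 ≤ p) :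
    A₁ * (i : ℝ) ^ B₁ * Real.log x ^ C₁ / x ≤ A * (p : ℝ) ^ B * Real.log x ^ C / x := by
  have hx1 : 1 < x := ha.trans_le hax
  have hx0 : 0 < x := by linarith
  have hL : 0 < Real.log x := Real.log_pos hx1
  have hLa : Real.log a ≤ Real.log x := Real.log_le_log (by linarith) hax
  have hla0 : 0 < Real.log a := Real.log_pos ha
  set k := max 1 (Real.log a ^ (C₁ - C)) with hk
  have hk1 : (1:ℝ) ≤ k := le_max_left _ _
  have hi : (i : ℝ) ^ B₁ ≤ (p : ℝ) ^ B := by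
    calc (i : ℝ) ^ B₁ ≤ (p : ℝ) ^ B₁ :=
          Real.rpow_le_rpow (Nat.cast_nonneg i) (by exact_mod_cast hip) hB₁
      _ ≤ (p : ℝ) ^ B :=
          Real.rpow_le_rpow_of_exponent_le (by exact_mod_cast hp) hBB
  have hLC : Real.log x ^ C₁ ≤ k * Real.log x ^ C := by
    rcases le_or_gt 1 (Real.log x) with h1 | h1
    · calc Real.log x ^ C₁ ≤ Real.log x ^ C := Real.rpow_le_rpow_of_exponent_le h1 hCC
        _ ≤ k * Real.log x ^ C := le_mul_of_one_le_left (Real.rpow_nonneg hL.le _) hk1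
    · have e1 : Real.log x ^ C₁ = Real.log x ^ (C₁ - C) * Real.log x ^ C := by
        rw [← Real.rpow_add hL]; ring_nf
      have e2 : Real.log x ^ (C₁ - C) ≤ Real.log a ^ (C₁ - C) :=
        Real.rpow_le_rpow_of_nonpos hla0 hLa (by linarith)
      rw [e1]
      exact mul_le_mul_of_nonneg_right (e2.trans (le_max_right _ _)) (Real.rpow_nonneg hL.le _)
  have hnum : A₁ * (i : ℝ) ^ B₁ * Real.log x ^ C₁ ≤ A * (p : ℝ) ^ B * Real.log x ^ C := by
    calc A₁ * (i : ℝ) ^ B₁ * Real.log x ^ C₁ ≤ A₁ * (p : ℝ) ^ B * (k * Real.log x ^ C) := by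
          apply mul_le_mul (mul_le_mul_of_nonneg_left hi hA₁) hLC (Real.rpow_nonneg hL.le _)
          positivity
      _ = (A₁ * k) * (p : ℝ) ^ B * Real.log x ^ C := by ring
      _ ≤ A * (p : ℝ) ^ B * Real.log x ^ C := by
          apply mul_le_mul_of_nonneg_right (mul_le_mul_of_nonneg_right hA _)
            (Real.rpow_nonneg hL.le _)
          positivity
  exact div_le_div_of_nonneg_right hnum hx0.le

private lemma pow_term_le {a x : ℝ} (ha : 1 < a) (hax : a ≤ x)
    {A₁ B₁ C₁ B C A : ℝ} (hA₁ : 0 ≤ A₁) (hB₁ : 0 ≤ B₁) (hBB : B₁ ≤ B) (hCC : C₁ ≤ C)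
    (hA : A₁ * max 1 (Real.log a ^ (C₁ - C)) ≤ A)
    {i p : ℕ} (hip : i ≤ p) :
    (A₁ * (i : ℝ) ^ B₁ * Real.log x ^ C₁ / x) ^ i
      ≤ (A * (p : ℝ) ^ B * Real.log x ^ C / x) ^ i := by
  rcases Nat.eq_zero_or_pos i with rfl | hi0
  · simp
  · have hx0 : 0 < x := by linarith [ha.trans_le hax]
    have hL : 0 ≤ Real.log x := Real.log_nonneg (by linarith [ha.trans_le hax])
    have hb0 : 0 ≤ A₁ * (i : ℝ) ^ B₁ * Real.log x ^ C₁ / x :=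
      div_nonneg (mul_nonneg (mul_nonneg hA₁ (Real.rpow_nonneg (Nat.cast_nonneg i) _))
        (Real.rpow_nonneg hL _)) hx0.le
    exact pow_le_pow_left₀ hb0 (base_le ha hax hA₁ hB₁ hBB hCC hA hip (le_trans hi0 hip)) i

/-- A smooth function `h` on `[a,∞)` is slow if there are nonnegative reals
`A, B, C, D` with `|h^{(p)}(x)/p!| ≤ D (A p^B (log x)^C / x)^p` for all `p ≥ 0`
and `x ≥ a`. -/
def IsSlowOn (a : ℝ) (h : ℝ → ℝ) : Prop :=
  ContDiffOn ℝ (⊤ : ℕ∞) h (Set.Ici a) ∧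
    ∃ A B C D : ℝ, 0 ≤ A ∧ 0 ≤ B ∧ 0 ≤ C ∧ 0 ≤ D ∧
      ∀ (p : ℕ), ∀ x ≥ a,
        |iteratedDerivWithin p h (Set.Ici a) x| / (p.factorial : ℝ) ≤
          D * (A * (p : ℝ) ^ B * Real.log x ^ C / x) ^ p

/-- The set of slow functions on `[a,∞)` (`a > 1`) is an algebra stable under
derivation: if `f` and `g` are slow, then so are `f + g`, `f·g` and `f'`. -/
theorem slow_algebra (a : ℝ) (ha : 1 < a) (f g : ℝ → ℝ)
    (hf : IsSlowOn a f) (hg : IsSlowOn a g) :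
    IsSlowOn a (fun x => f x + g x) ∧ IsSlowOn a (fun x => f x * g x) ∧
      IsSlowOn a (derivWithin f (Set.Ici a)) := by
  obtain ⟨hfs, A₁, B₁, C₁, D₁, hA₁, hB₁, hC₁, hD₁, hfb⟩ := hf
  obtain ⟨hgs, A₂, B₂, C₂, D₂, hA₂, hB₂, hC₂, hD₂, hgb⟩ := hg
  have hs : UniqueDiffOn ℝ (Set.Ici a) := uniqueDiffOn_Ici a
  set B := max B₁ B₂ with hB
  set C := max C₁ C₂ with hC
  set A' := max (A₁ * max 1 (Real.log a ^ (C₁ - C))) (A₂ * max 1 (Real.log a ^ (C₂ - C)))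
    with hA'
  have hB0 : 0 ≤ B := le_trans hB₁ (le_max_left _ _)
  have hC0 : 0 ≤ C := le_trans hC₁ (le_max_left _ _)
  have hA'0 : 0 ≤ A' := le_trans (mul_nonneg hA₁ (le_trans zero_le_one (le_max_left _ _)))
    (le_max_left _ _)
  -- generic nonnegativity facts
  have hterm_f : ∀ (i p : ℕ), i ≤ p → ∀ x, a ≤ x →
      (A₁ * (i : ℝ) ^ B₁ * Real.log x ^ C₁ / x) ^ i
        ≤ (A' * (p : ℝ) ^ B * Real.log x ^ C / x) ^ i := fun i p hip x hx =>
    pow_term_le ha hx hA₁ hB₁ (le_max_left _ _) (le_max_left _ _) (le_max_left _ _) hip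
  have hterm_g : ∀ (i p : ℕ), i ≤ p → ∀ x, a ≤ x →
      (A₂ * (i : ℝ) ^ B₂ * Real.log x ^ C₂ / x) ^ i
        ≤ (A' * (p : ℝ) ^ B * Real.log x ^ C / x) ^ i := fun i p hip x hx =>
    pow_term_le ha hx hA₂ hB₂ (le_max_right _ _) (le_max_right _ _) (le_max_right _ _) hip
  have hθ0 : ∀ (p : ℕ) (x : ℝ), a ≤ x → 0 ≤ A' * (p : ℝ) ^ B * Real.log x ^ C / x := by
    intro p x hx
    have hx0 : 0 < x := by linarith [ha.trans_le hx]
    have hL : 0 ≤ Real.log x := Real.log_nonneg (by linarith)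
    exact div_nonneg (mul_nonneg (mul_nonneg hA'0 (Real.rpow_nonneg (Nat.cast_nonneg p) _))
      (Real.rpow_nonneg hL _)) hx0.le
  refine ⟨⟨hfs.add hgs, A', B, C, D₁ + D₂, hA'0, hB0, hC0, by positivity, ?_⟩,
    ⟨hfs.mul hgs, 2 * A', B, C, D₁ * D₂, by positivity, hB0, hC0, by positivity, ?_⟩,
    ⟨hfs.derivWithin hs (by simp), ?_⟩⟩
  · -- sum
    intro p x hx
    have hxmem : x ∈ Set.Ici a := hx
    have heq : iteratedDerivWithin p (fun y => f y + g y) (Set.Ici a) x =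
        iteratedDerivWithin p f (Set.Ici a) x + iteratedDerivWithin p g (Set.Ici a) x :=
      iteratedDerivWithin_add hxmem hs ((hfs x hxmem).of_le (by exact_mod_cast le_top)) ((hgs x hxmem).of_le (by exact_mod_cast le_top))
    rw [heq]
    calc |iteratedDerivWithin p f (Set.Ici a) x + iteratedDerivWithin p g (Set.Ici a) x| /
          (p.factorial : ℝ)
        ≤ |iteratedDerivWithin p f (Set.Ici a) x| / (p.factorial : ℝ) +
          |iteratedDerivWithin p g (Set.Ici a) x| / (p.factorial : ℝ) := by
          rw [← add_div]
          exact div_le_div_of_nonneg_right (abs_add_le _ _) (by positivity)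
      _ ≤ D₁ * (A' * (p : ℝ) ^ B * Real.log x ^ C / x) ^ p +
          D₂ * (A' * (p : ℝ) ^ B * Real.log x ^ C / x) ^ p := by
          gcongr
          · exact (hfb p x hx).trans
              (mul_le_mul_of_nonneg_left (hterm_f p p le_rfl x hx) hD₁)
          · exact (hgb p x hx).trans
              (mul_le_mul_of_nonneg_left (hterm_g p p le_rfl x hx) hD₂)
      _ = (D₁ + D₂) * (A' * (p : ℝ) ^ B * Real.log x ^ C / x) ^ p := by ring
  · -- product
    intro p x hx
    have hxmem : x ∈ Set.Ici a := hx
    set θ := A' * (p : ℝ) ^ B * Real.log x ^ C / x with hθ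
    have hθnn : 0 ≤ θ := hθ0 p x hx
    have hleib : |iteratedDerivWithin p (fun y => f y * g y) (Set.Ici a) x| ≤
        ∑ i ∈ Finset.range (p + 1), (p.choose i : ℝ) *
          |iteratedDerivWithin i f (Set.Ici a) x| *
          |iteratedDerivWithin (p - i) g (Set.Ici a) x| := by
      have := norm_iteratedFDerivWithin_mul_le (𝕜 := ℝ) hfs hgs hs hxmem (by exact_mod_cast (le_top : ((p:ℕ) : ℕ∞) ≤ ⊤) : ((p:ℕ) : WithTop ℕ∞) ≤ ((⊤ : ℕ∞) : WithTop ℕ∞))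
      simpa [norm_iteratedFDerivWithin_eq_norm_iteratedDerivWithin, Real.norm_eq_abs] using this
    have hsum : ∑ i ∈ Finset.range (p + 1), (p.choose i : ℝ) *
          |iteratedDerivWithin i f (Set.Ici a) x| *
          |iteratedDerivWithin (p - i) g (Set.Ici a) x|
        ≤ (p + 1 : ℝ) * ((p.factorial : ℝ) * (D₁ * D₂) * θ ^ p) := by
      have hterm : ∀ i ∈ Finset.range (p + 1), (p.choose i : ℝ) *
          |iteratedDerivWithin i f (Set.Ici a) x| *
          |iteratedDerivWithin (p - i) g (Set.Ici a) x|
          ≤ (p.factorial : ℝ) * (D₁ * D₂) * θ ^ p := by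
        intro i hi
        have hip : i ≤ p := Nat.lt_succ_iff.mp (Finset.mem_range.mp hi)
        have hf' : |iteratedDerivWithin i f (Set.Ici a) x| ≤
            (i.factorial : ℝ) * (D₁ * θ ^ i) := by
          have h1 := (hfb i x hx).trans
            (mul_le_mul_of_nonneg_left (hterm_f i p hip x hx) hD₁)
          rw [div_le_iff₀ (by positivity : (0:ℝ) < (i.factorial : ℝ))] at h1
          linarith [h1]
        have hg' : |iteratedDerivWithin (p - i) g (Set.Ici a) x| ≤
            ((p - i).factorial : ℝ) * (D₂ * θ ^ (p - i)) := by
          have h1 := (hgb (p - i) x hx).trans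
            (mul_le_mul_of_nonneg_left (hterm_g (p - i) p (Nat.sub_le p i) x hx) hD₂)
          rw [div_le_iff₀ (by positivity : (0:ℝ) < ((p - i).factorial : ℝ))] at h1
          linarith [h1]
        calc (p.choose i : ℝ) * |iteratedDerivWithin i f (Set.Ici a) x| *
              |iteratedDerivWithin (p - i) g (Set.Ici a) x|
            ≤ (p.choose i : ℝ) * ((i.factorial : ℝ) * (D₁ * θ ^ i)) *
              (((p - i).factorial : ℝ) * (D₂ * θ ^ (p - i))) := by
              gcongr <;> first | exact abs_nonneg _ | exact hf' | exact hg'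
          _ = ((p.choose i : ℝ) * (i.factorial : ℝ) * ((p - i).factorial : ℝ)) *
              (D₁ * D₂) * (θ ^ i * θ ^ (p - i)) := by ring
          _ = (p.factorial : ℝ) * (D₁ * D₂) * θ ^ p := by
              rw [← pow_add, Nat.add_sub_cancel' hip]
              congr 2
              exact_mod_cast congrArg (Nat.cast (R := ℝ))
                (Nat.choose_mul_factorial_mul_factorial hip)
      calc ∑ i ∈ Finset.range (p + 1), (p.choose i : ℝ) *
            |iteratedDerivWithin i f (Set.Ici a) x| *
            |iteratedDerivWithin (p - i) g (Set.Ici a) x|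
          ≤ ∑ _i ∈ Finset.range (p + 1), (p.factorial : ℝ) * (D₁ * D₂) * θ ^ p :=
            Finset.sum_le_sum hterm
        _ = (p + 1 : ℝ) * ((p.factorial : ℝ) * (D₁ * D₂) * θ ^ p) := by
            rw [Finset.sum_const, Finset.card_range]; push_cast; ring
    have hp2 : (p + 1 : ℝ) ≤ 2 ^ p := by
      exact_mod_cast Nat.succ_le_of_lt (Nat.lt_two_pow_self : p < 2 ^ p)
    have hbase : 2 * A' * (p : ℝ) ^ B * Real.log x ^ C / x = 2 * θ := by rw [hθ]; ring
    rw [div_le_iff₀ (by positivity : (0:ℝ) < (p.factorial : ℝ))]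
    calc |iteratedDerivWithin p (fun y => f y * g y) (Set.Ici a) x|
        ≤ ∑ i ∈ Finset.range (p + 1), (p.choose i : ℝ) *
          |iteratedDerivWithin i f (Set.Ici a) x| *
          |iteratedDerivWithin (p - i) g (Set.Ici a) x| := hleib
      _ ≤ (p + 1 : ℝ) * ((p.factorial : ℝ) * (D₁ * D₂) * θ ^ p) := hsum
      _ ≤ (2:ℝ) ^ p * ((p.factorial : ℝ) * (D₁ * D₂) * θ ^ p) := by
          apply mul_le_mul_of_nonneg_right hp2
          exact mul_nonneg (mul_nonneg (by positivity) (by positivity)) (pow_nonneg hθnn p)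
      _ = D₁ * D₂ * (2 * A' * (p : ℝ) ^ B * Real.log x ^ C / x) ^ p * (p.factorial : ℝ) := by
          rw [hbase, mul_pow]; ring
  · -- derivative
    set M := max 1 (C₁ ^ C₁) with hM
    have hM1 : (1:ℝ) ≤ M := le_max_left _ _
    have hM0 : (0:ℝ) ≤ M := zero_le_one.trans hM1
    refine ⟨A₁ * (2:ℝ) ^ (2 * B₁ + 1), B₁, C₁, max D₁ (D₁ * (A₁ * M)),
      mul_nonneg hA₁ (Real.rpow_nonneg (by norm_num) _), hB₁, hC₁,
      le_trans hD₁ (le_max_left _ _), ?_⟩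
    intro p x hx
    have hx1 : 1 < x := ha.trans_le hx
    have hx0 : 0 < x := by linarith
    have hL0 : 0 ≤ Real.log x := Real.log_nonneg (by linarith)
    have hMle : Real.log x ^ C₁ / x ≤ M := log_rpow_div_le ha hx hC₁
    have heq : iteratedDerivWithin p (derivWithin f (Set.Ici a)) (Set.Ici a) x =
        iteratedDerivWithin (p + 1) f (Set.Ici a) x := (congrFun iteratedDerivWithin_succ' x).symm
    rw [heq]
    rcases Nat.eq_zero_or_pos p with rfl | hp1
    · simp only [Nat.factorial_zero, Nat.cast_one, div_one, pow_zero, mul_one]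
      have h1 := hfb 1 x hx
      simp only [Nat.factorial_one, Nat.cast_one, div_one, pow_one, Nat.cast_ofNat,
        Real.one_rpow] at h1
      calc |iteratedDerivWithin (0 + 1) f (Set.Ici a) x|
          ≤ D₁ * (A₁ * Real.log x ^ C₁ / x) := by
            simpa [Real.one_rpow] using h1
        _ = D₁ * A₁ * (Real.log x ^ C₁ / x) := by ring
        _ ≤ D₁ * A₁ * M := mul_le_mul_of_nonneg_left hMle (mul_nonneg hD₁ hA₁)
        _ ≤ max D₁ (D₁ * (A₁ * M)) := by rw [mul_assoc]; exact le_max_right _ _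
    · -- p ≥ 1
      have hq0 : (0:ℝ) < (p : ℝ) + 1 := by positivity
      have hp1' : (1:ℝ) ≤ (p : ℝ) := by exact_mod_cast hp1
      set L := Real.log x ^ C₁ with hLdef
      have hLnn : 0 ≤ L := Real.rpow_nonneg hL0 _
      set θq := A₁ * ((p : ℝ) + 1) ^ B₁ * L / x with hθq
      have hθq0 : 0 ≤ θq :=
        div_nonneg (mul_nonneg (mul_nonneg hA₁ (Real.rpow_nonneg hq0.le _)) hLnn) hx0.le
      have hfp := hfb (p + 1) x hx
      push_cast at hfp
      rw [div_le_iff₀ (by positivity : (0:ℝ) < ((p + 1).factorial : ℝ))] at hfp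
      have hfp' : |iteratedDerivWithin (p + 1) f (Set.Ici a) x| ≤
          ((p + 1).factorial : ℝ) * (D₁ * θq ^ (p + 1)) := by
        rw [hθq, hLdef]
        calc |iteratedDerivWithin (p + 1) f (Set.Ici a) x|
            ≤ D₁ * (A₁ * ((p:ℝ) + 1) ^ B₁ * Real.log x ^ C₁ / x) ^ (p + 1) *
              ((p + 1).factorial : ℝ) := hfp
          _ = _ := by ring
      -- key single-factor estimates
      have e1 : ((p : ℝ) + 1) * θq ≤ A₁ * M * (((p : ℝ) + 1) ^ (B₁ + 1)) := by
        have hql : ((p : ℝ) + 1) ^ (B₁ + 1) = ((p : ℝ) + 1) ^ B₁ * ((p : ℝ) + 1) :=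
          Real.rpow_add_one hq0.ne' B₁
        calc ((p : ℝ) + 1) * θq
            = (A₁ * (((p : ℝ) + 1) ^ (B₁ + 1))) * (L / x) := by rw [hθq, hql]; ring
          _ ≤ (A₁ * (((p : ℝ) + 1) ^ (B₁ + 1))) * M := by
              apply mul_le_mul_of_nonneg_left _ (mul_nonneg hA₁ (Real.rpow_nonneg hq0.le _))
              rw [hLdef]; exact hMle
          _ = A₁ * M * (((p : ℝ) + 1) ^ (B₁ + 1)) := by ring
      have e2 : ((p : ℝ) + 1) ^ (B₁ + 1) ≤ ((2:ℝ) ^ (B₁ + 1)) ^ p := by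
        have hq2 : (p : ℝ) + 1 ≤ (2:ℝ) ^ p := by
          exact_mod_cast Nat.succ_le_of_lt (Nat.lt_two_pow_self : p < 2 ^ p)
        calc ((p : ℝ) + 1) ^ (B₁ + 1) ≤ ((2:ℝ) ^ p) ^ (B₁ + 1) :=
              Real.rpow_le_rpow hq0.le hq2 (by linarith)
          _ = ((2:ℝ) ^ (B₁ + 1)) ^ p := by
              rw [← Real.rpow_natCast (2:ℝ) p, ← Real.rpow_natCast ((2:ℝ) ^ (B₁ + 1)) p,
                ← Real.rpow_mul (by norm_num), ← Real.rpow_mul (by norm_num), mul_comm]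
      have e3 : θq ≤ A₁ * ((2:ℝ) ^ B₁ * (p : ℝ) ^ B₁) * L / x := by
        have hq2p : ((p : ℝ) + 1) ^ B₁ ≤ (2:ℝ) ^ B₁ * (p : ℝ) ^ B₁ := by
          calc ((p : ℝ) + 1) ^ B₁ ≤ ((2:ℝ) * (p : ℝ)) ^ B₁ :=
                Real.rpow_le_rpow hq0.le (by linarith) hB₁
            _ = (2:ℝ) ^ B₁ * (p : ℝ) ^ B₁ :=
                Real.mul_rpow (by norm_num) (Nat.cast_nonneg p)
        rw [hθq]
        apply div_le_div_of_nonneg_right _ hx0.le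
        exact mul_le_mul_of_nonneg_right (mul_le_mul_of_nonneg_left hq2p hA₁) hLnn
      have e4 : θq ^ p ≤ (A₁ * ((2:ℝ) ^ B₁ * (p : ℝ) ^ B₁) * L / x) ^ p :=
        pow_le_pow_left₀ hθq0 e3 p
      have hpow2 : (2:ℝ) ^ (B₁ + 1) * (2:ℝ) ^ B₁ = (2:ℝ) ^ (2 * B₁ + 1) := by
        rw [← Real.rpow_add (by norm_num : (0:ℝ) < 2)]; ring_nf
      have key : ((p : ℝ) + 1) * (D₁ * θq ^ (p + 1)) ≤
          max D₁ (D₁ * (A₁ * M)) *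
            (A₁ * (2:ℝ) ^ (2 * B₁ + 1) * (p : ℝ) ^ B₁ * Real.log x ^ C₁ / x) ^ p := by
        have hbase2 : (2:ℝ) ^ (B₁ + 1) * (A₁ * ((2:ℝ) ^ B₁ * (p : ℝ) ^ B₁) * L / x) =
            A₁ * (2:ℝ) ^ (2 * B₁ + 1) * (p : ℝ) ^ B₁ * Real.log x ^ C₁ / x := by
          rw [hLdef]
          calc (2:ℝ) ^ (B₁ + 1) * (A₁ * ((2:ℝ) ^ B₁ * (p : ℝ) ^ B₁) * Real.log x ^ C₁ / x)
              = ((2:ℝ) ^ (B₁ + 1) * (2:ℝ) ^ B₁) * A₁ * (p : ℝ) ^ B₁ * Real.log x ^ C₁ / x := by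
                ring
            _ = _ := by rw [hpow2]; ring
        calc ((p : ℝ) + 1) * (D₁ * θq ^ (p + 1))
            = D₁ * (((p : ℝ) + 1) * θq) * θq ^ p := by rw [pow_succ]; ring
          _ ≤ D₁ * (A₁ * M * ((2:ℝ) ^ (B₁ + 1)) ^ p) *
              (A₁ * ((2:ℝ) ^ B₁ * (p : ℝ) ^ B₁) * L / x) ^ p := by
              apply mul_le_mul _ e4 (pow_nonneg hθq0 p)
              · exact mul_nonneg hD₁ (mul_nonneg (mul_nonneg hA₁ hM0) (by positivity))
              · exact mul_le_mul_of_nonneg_left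
                  (e1.trans (mul_le_mul_of_nonneg_left e2 (mul_nonneg hA₁ hM0))) hD₁
          _ = (D₁ * (A₁ * M)) *
              ((2:ℝ) ^ (B₁ + 1) * (A₁ * ((2:ℝ) ^ B₁ * (p : ℝ) ^ B₁) * L / x)) ^ p := by
              rw [mul_pow]; ring
          _ = (D₁ * (A₁ * M)) *
              (A₁ * (2:ℝ) ^ (2 * B₁ + 1) * (p : ℝ) ^ B₁ * Real.log x ^ C₁ / x) ^ p := by
              rw [hbase2]
          _ ≤ _ := by
              apply mul_le_mul_of_nonneg_right (le_max_right _ _)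
              apply pow_nonneg
              exact div_nonneg (mul_nonneg (mul_nonneg
                (mul_nonneg hA₁ (Real.rpow_nonneg (by norm_num) _))
                (Real.rpow_nonneg (Nat.cast_nonneg p) _)) (Real.rpow_nonneg hL0 _)) hx0.le
      rw [div_le_iff₀ (by positivity : (0:ℝ) < (p.factorial : ℝ))]
      calc |iteratedDerivWithin (p + 1) f (Set.Ici a) x|
          ≤ ((p + 1).factorial : ℝ) * (D₁ * θq ^ (p + 1)) := hfp'
        _ = (((p : ℝ) + 1) * (D₁ * θq ^ (p + 1))) * (p.factorial : ℝ) := by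
            rw [Nat.factorial_succ]; push_cast; ring
        _ ≤ max D₁ (D₁ * (A₁ * M)) *
            (A₁ * (2:ℝ) ^ (2 * B₁ + 1) * (p : ℝ) ^ B₁ * Real.log x ^ C₁ / x) ^ p *
            (p.factorial : ℝ) :=
            mul_le_mul_of_nonneg_right key (Nat.cast_nonneg _)
end

section
/- Suppose the structure ℜ expanding the real field has the property that every definable subset E of ℝⁿ all of whose coordinate projections to ℝ have empty interior satisfies: for every ε > 0 there is C > 0 with #E(ℚ,T) ≤ C T^ε for all T ≥ 1. Then for every definable set E ⊆ ℝ, #E^{trans}(ℚ,T) = o(T) as T → ∞, where E^{trans} is E with all infinite semialgebraic subsets removed. -/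
/-- The number of rational points of `X ⊆ ℝ` of height at most `T`. -/
noncomputable def ratCount (X : Set ℝ) (T : ℝ) : ℕ :=
  Set.ncard {q : ℚ | (q : ℝ) ∈ X ∧ (qheight q : ℝ) ≤ T}

/-- The number of rational points of `E ⊆ ℝⁿ` of height at most `T`. -/
noncomputable def ratCountN (n : ℕ) (E : Set (Fin n → ℝ)) (T : ℝ) : ℕ :=
  Set.ncard {q : Fin n → ℚ | (fun i => (q i : ℝ)) ∈ E ∧ ∀ i, (qheight (q i) : ℝ) ≤ T}

/-- A subset of `ℝ` is semialgebraic iff it is a finite union of sets of the form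
`{x | p(x) = 0 ∧ q(x) > 0}` for polynomials `p, q`. -/
def IsSemialgebraic (S : Set ℝ) : Prop :=
  ∃ (k : ℕ) (p q : Fin k → Polynomial ℝ),
    S = ⋃ i, {x : ℝ | (p i).eval x = 0 ∧ 0 < (q i).eval x}

/-- The transcendental part of `E ⊆ ℝ`: `E` with all infinite semialgebraic
subsets removed. -/
def transPart (E : Set ℝ) : Set ℝ :=
  E \ ⋃₀ {S : Set ℝ | S ⊆ E ∧ IsSemialgebraic S ∧ S.Infinite}

/-!
A point of `interior E` lies in an open interval contained in `E`, which is an infinite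
semialgebraic set, so `E^trans ⊆ E \ interior E`. The set `E \ interior E` is definable with
empty interior, hence has at most `C T^{1/2}` rational points of height `≤ T`, which is `o(T)`.
-/

open Set Filter Asymptotics

theorem finite_setOf_qheight_le (T : ℝ) : {q : ℚ | (qheight q : ℝ) ≤ T}.Finite := by
  set N := ⌈T⌉₊
  refine (((finite_Icc (-(N : ℤ)) N).prod (finite_Icc (0 : ℕ) N)).image
    fun p : ℤ × ℕ => (p.1 : ℚ) / p.2).subset fun q (hq : (qheight q : ℝ) ≤ T) => ?_
  have hN : qheight q ≤ N := by exact_mod_cast hq.trans (Nat.le_ceil T)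
  have hnum : q.num.natAbs ≤ N := (le_max_left _ _).trans hN
  have hden : q.den ≤ N := (le_max_right _ _).trans hN
  refine ⟨(q.num, q.den), ⟨⟨?_, ?_⟩, Nat.zero_le _, hden⟩, Rat.num_div_den q⟩ <;> omega

theorem ratCount_mono {X Y : Set ℝ} (h : X ⊆ Y) (T : ℝ) : ratCount X T ≤ ratCount Y T :=
  ncard_le_ncard (fun _ hq => ⟨h hq.1, hq.2⟩)
    ((finite_setOf_qheight_le T).subset fun _ hq => hq.2)

theorem ratCountN_one (X : Set ℝ) (T : ℝ) :
    ratCountN 1 {v | v 0 ∈ X} T = ratCount X T := by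
  have hinj : Function.Injective fun q : Fin 1 → ℚ => q 0 :=
    fun _ _ h => funext fun i => Fin.fin_one_eq_zero i ▸ h
  have hsurj : {q : ℚ | (q : ℝ) ∈ X ∧ (qheight q : ℝ) ≤ T} ⊆ range fun q : Fin 1 → ℚ => q 0 :=
    fun q _ => ⟨fun _ => q, rfl⟩
  rw [ratCount, ← ncard_preimage_of_injective_subset_range hinj hsurj, ratCountN]
  simp only [Fin.forall_fin_one, mem_ofPred_eq, preimage_ofPred_eq]

theorem image_eval_setOf_fin_one {α : Type*} [Nonempty α] (X : Set α) (i : Fin 1) :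
    (fun v : Fin 1 → α => v i) '' {v | v 0 ∈ X} = X := by
  rw [Fin.fin_one_eq_zero i]
  exact image_preimage_eq X (Function.surjective_eval 0)

theorem interior_sdiff_interior {α : Type*} [TopologicalSpace α] (s : Set α) :
    interior (s \ interior s) = ∅ :=
  eq_empty_iff_forall_notMem.2 fun _ hx =>
    (interior_subset hx).2 (interior_mono sdiff_subset hx)

theorem isSemialgebraic_Ioo {a b : ℝ} (hab : a ≤ b) : IsSemialgebraic (Ioo a b) := by
  open Polynomial in
  refine ⟨1, fun _ => 0, fun _ => (X - C a) * (C b - X), ?_⟩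
  ext x
  simp only [mem_Ioo, mem_iUnion, eval_mul, eval_sub, eval_X, eval_C, eval_zero, mem_ofPred_eq,
    true_and, exists_const, mul_pos_iff, sub_pos]
  constructor
  · exact Or.inl
  · rintro (h | ⟨h₁, h₂⟩)
    · exact h
    · exact ⟨by linarith, by linarith⟩

theorem transPart_subset_sdiff_interior (E : Set ℝ) : transPart E ⊆ E \ interior E := by
  rintro x ⟨hxE, hx⟩
  refine ⟨hxE, fun hxint => hx ?_⟩
  obtain ⟨δ, hδ, hball⟩ := Metric.mem_nhds_iff.mp (mem_interior_iff_mem_nhds.mp hxint)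
  rw [Real.ball_eq_Ioo] at hball
  exact ⟨Ioo (x - δ) (x + δ), ⟨hball, isSemialgebraic_Ioo (by linarith), Ioo_infinite (by linarith)⟩,
    by linarith, by linarith⟩

theorem isLittleO_rpow_id_atTop {ε : ℝ} (hε : ε < 1) :
    (fun T : ℝ => T ^ ε) =o[atTop] fun T => T := by
  refine (isLittleO_iff_tendsto' ?_).2 ?_
  · filter_upwards [eventually_gt_atTop 0] with T hT h using absurd h hT.ne'
  · have h := tendsto_rpow_neg_atTop (sub_pos.2 hε)
    rw [neg_sub] at h
    refine h.congr' ?_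
    filter_upwards [eventually_gt_atTop 0] with T hT using Real.rpow_sub_one hT.ne' ε

theorem isLittleO_id_of_le_mul_rpow {f : ℝ → ℝ} {C ε : ℝ} (hε : ε < 1)
    (hf₀ : ∀ T, 0 ≤ f T) (hf : ∀ T, 1 ≤ T → f T ≤ C * T ^ ε) :
    f =o[atTop] fun T => T := by
  refine IsBigO.trans_isLittleO (IsBigO.of_bound C ?_) (isLittleO_rpow_id_atTop hε)
  filter_upwards [eventually_ge_atTop 1] with T hT
  rw [Real.norm_of_nonneg (hf₀ T), Real.norm_of_nonneg (by positivity)]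
  exact hf T hT

/-- Implication 3 ⇒ 1 of Proposition 4.2: if, in a structure `D` on the real
field (so that `E ↦ E \ int E` preserves definability of subsets of `ℝ`), every
definable `E ⊆ ℝⁿ` all of whose coordinate projections have empty interior has
sub-polynomial rational count, then for every definable `E ⊆ ℝ` the count
`#E^trans(ℚ, T)` is `o(T)`. -/
theorem subpolynomial_implies_littleO (D : ∀ n : ℕ, Set (Set (Fin n → ℝ)))
    (hD : ∀ E : Set ℝ, {v : Fin 1 → ℝ | v 0 ∈ E} ∈ D 1 →
      {v : Fin 1 → ℝ | v 0 ∈ E \ interior E} ∈ D 1)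
    (hcount : ∀ n : ℕ, ∀ E ∈ D n,
      (∀ i : Fin n, interior ((fun v => v i) '' E) = ∅) →
      ∀ ε : ℝ, 0 < ε → ∃ C : ℝ, 0 < C ∧ ∀ T : ℝ, 1 ≤ T →
        (ratCountN n E T : ℝ) ≤ C * T ^ ε)
    (E : Set ℝ) (hE : {v : Fin 1 → ℝ | v 0 ∈ E} ∈ D 1) :
    (fun T : ℝ => (ratCount (transPart E) T : ℝ)) =o[Filter.atTop] (fun T => T) := by
  have hproj (i : Fin 1) :
      interior ((fun v => v i) '' {v : Fin 1 → ℝ | v 0 ∈ E \ interior E}) = ∅ := by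
    rw [image_eval_setOf_fin_one]
    exact interior_sdiff_interior E
  obtain ⟨C, -, hC⟩ := hcount 1 _ (hD E hE) hproj (1 / 2) one_half_pos
  have hbound (T : ℝ) (hT : 1 ≤ T) : (ratCount (transPart E) T : ℝ) ≤ C * T ^ (1 / 2 : ℝ) :=
    calc (ratCount (transPart E) T : ℝ)
        ≤ ratCount (E \ interior E) T := by
          exact_mod_cast ratCount_mono (transPart_subset_sdiff_interior E) T
      _ = ratCountN 1 {v | v 0 ∈ E \ interior E} T := by rw [ratCountN_one]
      _ ≤ C * T ^ (1 / 2 : ℝ) := hC T hT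
  exact isLittleO_id_of_le_mul_rpow (by norm_num) (fun _ => Nat.cast_nonneg _) hbound
end
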